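/- arXiv:2605.28705 — 5 statements merged into one kernel-verified Lean document; each statement's English description precedes it below -/
import Mathlib

section
/- Let d, M, T ≥ 1 and let P ∈ ℝ^{(d+1)×n} be a prompt matrix whose columns consist of example columns (x_{s,i}; y_{s,i}) for s = 1,…,T, i = 1,…,M together with query columns of the form (x; 0), and suppose the query column for task t is (x_{t,q}; 0). Let W* = a^{1/4}·[[0_{d×d}, 0_d],[0_d^T, 1]] and V* = a^{−1/4}·[[Γ^{−1}, 0_d],[0_d^T, 0]] (for any a > 0), and consider the linear self-attention output f_LSA(P) = P + W* P (P^T V* P)/M. Then the (d+1)-st coordinate of the query column of f_LSA(P) equals x_{t,q}^T Γ^{−1} ((1/M) Σ_{s=1}^T Σ_{i=1}^M x_{s,i} y_{s,i}). In particular, the prediction aggregates all tasks uniformly and is independent of the position t of the query. -/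
open Matrix BigOperators

/-- for linear self-attention with the trained parameters
`W* = a^{1/4}·[[0,0],[0,1]]`, `V* = a^{−1/4}·[[Γ⁻¹,0],[0,0]]`, applied to a prompt whose
columns are example columns `(x_{s,i}; y_{s,i})` (injectively indexed) together with
query columns carrying label `0`, the label coordinate of the query column equals
`x_{t,q}ᵀ Γ⁻¹ ((1/M) Σ_s Σ_i x_{s,i} y_{s,i})` — a uniform aggregation over all tasks,
independent of the position of the query. -/
theorem stmt_0 (d M T n : ℕ) (hd : 1 ≤ d) (hM : 1 ≤ M) (hT : 1 ≤ T)
    (N : ℝ) (hN : 0 < N)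
    (Λ : Matrix (Fin d) (Fin d) ℝ) (hΛsym : Λ.IsSymm) (hΛpd : Λ.PosDef)
    (Γ : Matrix (Fin d) (Fin d) ℝ)
    (hΓ : Γ = (1 + 1 / N) • Λ + (Λ.trace / N) • (1 : Matrix (Fin d) (Fin d) ℝ))
    (a : ℝ) (ha : 0 < a)
    (x : Fin T → Fin M → Fin d → ℝ) (y : Fin T → Fin M → ℝ) (xq : Fin d → ℝ)
    (P : Matrix (Fin d ⊕ Unit) (Fin n) ℝ)
    (ex : Fin T × Fin M → Fin n) (hex : Function.Injective ex)
    (q : Fin n) (hq : q ∉ Set.range ex)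
    (hPex : ∀ p : Fin T × Fin M,
        (∀ k, P (Sum.inl k) (ex p) = x p.1 p.2 k) ∧ P (Sum.inr ()) (ex p) = y p.1 p.2)
    (hPq : (∀ k, P (Sum.inl k) q = xq k) ∧ P (Sum.inr ()) q = 0)
    (hother : ∀ c : Fin n, c ∉ Set.range ex → P (Sum.inr ()) c = 0)
    (Wstar Vstar : Matrix (Fin d ⊕ Unit) (Fin d ⊕ Unit) ℝ)
    (hW : Wstar = a ^ ((1 : ℝ) / 4) •
        fromBlocks (0 : Matrix (Fin d) (Fin d) ℝ) 0 0 (1 : Matrix Unit Unit ℝ))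
    (hV : Vstar = a ^ (-(1 : ℝ) / 4) •
        fromBlocks Γ⁻¹ 0 0 (0 : Matrix Unit Unit ℝ))
    (out : Matrix (Fin d ⊕ Unit) (Fin n) ℝ)
    (hout : out = P + (M : ℝ)⁻¹ • (Wstar * P * (Pᵀ * Vstar * P))) :
    out (Sum.inr ()) q
      = xq ⬝ᵥ (Γ⁻¹ *ᵥ ((M : ℝ)⁻¹ • ∑ s, ∑ i, y s i • x s i)) := by
  have hΓsym : Γᵀ = Γ := by
    rw [hΓ]; simp [Matrix.transpose_add, Matrix.transpose_smul, hΛsym.eq]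
  have hΓinv : (Γ⁻¹)ᵀ = Γ⁻¹ := by
    rw [Matrix.transpose_nonsing_inv, hΓsym]
  have hsymm : ∀ v w : Fin d → ℝ, v ⬝ᵥ (Γ⁻¹ *ᵥ w) = w ⬝ᵥ (Γ⁻¹ *ᵥ v) := by
    intro v w
    rw [Matrix.dotProduct_mulVec, ← Matrix.mulVec_transpose, hΓinv,
      dotProduct_comm]
  have hpow : a ^ ((1:ℝ)/4) * a ^ (-(1:ℝ)/4) = 1 := by
    rw [← Real.rpow_add ha]; norm_num
  have hWP : ∀ c, (Wstar * P) (Sum.inr ()) c = a ^ ((1:ℝ)/4) * P (Sum.inr ()) c := by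
    intro c
    simp [hW, Matrix.mul_apply, Fintype.sum_sum_type]
  have hPVP : ∀ c, (Pᵀ * Vstar * P) c q
      = a ^ (-(1:ℝ)/4) * ((fun k => P (Sum.inl k) c) ⬝ᵥ (Γ⁻¹ *ᵥ xq)) := by
    intro c
    simp only [hV, Matrix.mul_apply, Matrix.transpose_apply, Matrix.smul_apply,
      Fintype.sum_sum_type, Matrix.fromBlocks_apply₁₁, Matrix.fromBlocks_apply₁₂,
      Matrix.fromBlocks_apply₂₁, Matrix.fromBlocks_apply₂₂,
      Matrix.zero_apply, mul_zero, zero_mul, smul_eq_mul, smul_zero,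
      Finset.sum_const_zero, add_zero, zero_add]
    simp only [Matrix.mulVec, dotProduct, Finset.mul_sum, Finset.sum_mul]
    rw [Finset.sum_comm]
    apply Finset.sum_congr rfl; intro k _
    apply Finset.sum_congr rfl; intro j _
    rw [hPq.1 j]; ring
  have key : out (Sum.inr ()) q
      = (M:ℝ)⁻¹ * ∑ c, P (Sum.inr ()) c * ((fun k => P (Sum.inl k) c) ⬝ᵥ (Γ⁻¹ *ᵥ xq)) := by
    rw [hout]
    simp only [Matrix.add_apply, Matrix.smul_apply, hPq.2, zero_add, smul_eq_mul]
    congr 1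
    rw [Matrix.mul_apply]
    rw [Finset.sum_congr rfl (fun c _ => by rw [hWP c, hPVP c])]
    apply Finset.sum_congr rfl; intro c _
    linear_combination (P (Sum.inr ()) c * ((fun k => P (Sum.inl k) c) ⬝ᵥ (Γ⁻¹ *ᵥ xq))) * hpow
  rw [key]
  have himg : ∑ c, P (Sum.inr ()) c * ((fun k => P (Sum.inl k) c) ⬝ᵥ (Γ⁻¹ *ᵥ xq))
      = ∑ p : Fin T × Fin M, y p.1 p.2 * ((x p.1 p.2) ⬝ᵥ (Γ⁻¹ *ᵥ xq)) := by
    rw [← Finset.sum_subset (Finset.subset_univ (Finset.univ.image ex)) (fun c _ hc => by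
      have hcr : c ∉ Set.range ex := fun ⟨p, hp⟩ => hc (Finset.mem_image.2 ⟨p, Finset.mem_univ _, hp⟩)
      rw [hother c hcr, zero_mul])]
    rw [Finset.sum_image (fun p _ p' _ h => hex h)]
    apply Finset.sum_congr rfl; intro p _
    rw [(hPex p).2]
    congr 1
    have hx : (fun k => P (Sum.inl k) (ex p)) = x p.1 p.2 := funext (hPex p).1
    rw [hx]
  rw [himg]
  rw [Matrix.mulVec_smul, dotProduct_smul, smul_eq_mul]
  congr 1
  rw [show (∑ s, ∑ i, y s i • x s i : Fin d → ℝ) = ∑ p : Fin T × Fin M, y p.1 p.2 • x p.1 p.2 by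
    rw [← Finset.sum_product']; rfl]
  rw [Finset.sum_congr rfl (fun p _ => by rw [hsymm (x p.1 p.2) xq])]
  simp only [Matrix.dotProduct_mulVec]
  have hdsum : (xq ᵥ* Γ⁻¹) ⬝ᵥ (∑ p : Fin T × Fin M, y p.1 p.2 • x p.1 p.2)
      = ∑ p : Fin T × Fin M, (xq ᵥ* Γ⁻¹) ⬝ᵥ (y p.1 p.2 • x p.1 p.2) := by
    simp only [dotProduct, Finset.sum_apply, Finset.mul_sum, Pi.smul_apply,
      smul_eq_mul]
    rw [Finset.sum_comm]
  rw [hdsum]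
  apply Finset.sum_congr rfl; intro p _
  rw [dotProduct_smul, smul_eq_mul, mul_comm]
end

section
/- Let d, M ≥ 1, 1 ≤ t, and let P ∈ ℝ^{(d+1)×n} be a prompt whose first t(M+1) columns consist, for each task s = 1,…,t in order, of the M example columns (x_{s,j}; y_{s,j}) followed by a query column (x_{s,q}; 0), so that column number t(M+1) is the task-t query column (x_{t,q}; 0). Consider masked linear self-attention f_MSA(P) = P + W* P · mask(P^T V* P), where [mask(A)]_{i,j} = A_{i,j}/j for i ≤ j and 0 for i > j, W* = a^{1/4}·[[0_{d×d}, 0_d],[0_d^T, 1]], V* = a^{−1/4}·[[Γ^{−1}, 0_d],[0_d^T, 0]] for any a > 0. Then the (d+1)-st coordinate of column t(M+1) of f_MSA(P) equals ŷ_{t,q} = x_{t,q}^T Γ^{−1} ( (1/(t(M+1))) Σ_{s=1}^t Σ_{j=1}^M x_{s,j} y_{s,j} ). -/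
open Matrix BigOperators

/-- The decoder mask: `[mask A]_{i,j} = A_{i,j}/j` for `i ≤ j` (1-indexed `j`, i.e.
`(j+1)` for 0-indexed `Fin` columns) and `0` for `i > j`. -/
noncomputable def maskMat {n : ℕ} (A : Matrix (Fin n) (Fin n) ℝ) : Matrix (Fin n) (Fin n) ℝ :=
  Matrix.of fun i j => if (i : ℕ) ≤ (j : ℕ) then A i j / ((j : ℕ) + 1) else 0

/-- The column index (0-based) of the `j`-th column of the task-`s` block, where each
task block consists of `M` example columns followed by one query column. -/
def colIdx (M t n : ℕ) (h : t * (M + 1) ≤ n) (s : Fin t) (j : Fin (M + 1)) : Fin n :=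
  ⟨(s : ℕ) * (M + 1) + (j : ℕ), by
    calc (s : ℕ) * (M + 1) + (j : ℕ)
        < (s : ℕ) * (M + 1) + (M + 1) := Nat.add_lt_add_left j.isLt _
      _ = ((s : ℕ) + 1) * (M + 1) := by ring
      _ ≤ t * (M + 1) := Nat.mul_le_mul_right _ s.isLt
      _ ≤ n := h⟩

/-! The output projection reads only the label row and the value projection only the feature
rows, so the label of the query column `q` is `a^{1/4} a^{-1/4}/(q+1) · Σ_{c ≤ q} y_c · x_cᵀ Γ⁻¹ x_q`.
The columns `c ≤ q` are exactly the `t(M+1)` task columns, the query columns among them carry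
label `0`, and `Γ⁻¹` is symmetric because `Λ` is, so `x_cᵀ Γ⁻¹ x_q = x_qᵀ Γ⁻¹ x_c`. -/

open Finset

section blocks

variable {ι κ R : Type*} [Fintype ι] [CommSemiring R]

lemma fromBlocks_zero_one_mul_apply_inr (P : Matrix (ι ⊕ Unit) κ R) (c : κ) :
    (fromBlocks (0 : Matrix ι ι R) 0 0 (1 : Matrix Unit Unit R) * P) (Sum.inr ()) c
      = P (Sum.inr ()) c := by
  simp [Matrix.mul_apply, Fintype.sum_sum_type]

lemma transpose_mul_fromBlocks_mul_apply (P : Matrix (ι ⊕ Unit) κ R) (B : Matrix ι ι R)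
    (c c' : κ) :
    (Pᵀ * fromBlocks B 0 0 (0 : Matrix Unit Unit R) * P) c c'
      = (fun k => P (Sum.inl k) c) ⬝ᵥ B *ᵥ fun k => P (Sum.inl k) c' := by
  simp only [Matrix.mul_apply, transpose_apply, Fintype.sum_sum_type, univ_unique,
    PUnit.default_eq_unit, sum_singleton, fromBlocks_apply₁₁, fromBlocks_apply₂₁,
    fromBlocks_apply₁₂, fromBlocks_apply₂₂, Matrix.zero_apply, mul_zero, zero_mul, add_zero,
    sum_const_zero, sum_mul, mul_sum, mul_assoc, dotProduct, mulVec]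
  exact sum_comm

lemma Matrix.IsSymm.dotProduct_mulVec_comm {B : Matrix ι ι R} (hB : B.IsSymm) (u v : ι → R) :
    u ⬝ᵥ B *ᵥ v = v ⬝ᵥ B *ᵥ u := by
  rw [dotProduct_mulVec, dotProduct_comm, ← vecMul_transpose, hB.eq]

end blocks

lemma sum_mul_maskMat_apply {n : ℕ} (f : Fin n → ℝ) (A : Matrix (Fin n) (Fin n) ℝ) (q : Fin n) :
    ∑ c, f c * maskMat A c q = (∑ c ∈ Iic q, f c * A c q) / ((q : ℕ) + 1) := by
  simp only [maskMat, Matrix.of_apply, ← Fin.le_def, mul_ite, mul_zero, ← sum_filter,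
    filter_ge_eq_Iic, sum_div, mul_div_assoc]

lemma maskedAttention_apply_inr {ι : Type*} [Fintype ι] {n : ℕ} (P : Matrix (ι ⊕ Unit) (Fin n) ℝ)
    (B : Matrix ι ι ℝ) (α β : ℝ) (q : Fin n) :
    (P + (α • fromBlocks (0 : Matrix ι ι ℝ) 0 0 (1 : Matrix Unit Unit ℝ)) * P
        * maskMat (Pᵀ * (β • fromBlocks B 0 0 (0 : Matrix Unit Unit ℝ)) * P)) (Sum.inr ()) q
      = P (Sum.inr ()) q + α * β * (∑ c ∈ Iic q, P (Sum.inr ()) c *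
          ((fun k => P (Sum.inl k) c) ⬝ᵥ B *ᵥ fun k => P (Sum.inl k) q)) / ((q : ℕ) + 1) := by
  rw [Matrix.add_apply, Matrix.mul_apply, Matrix.smul_mul, Matrix.mul_smul, Matrix.smul_mul]
  simp only [Matrix.smul_apply, smul_eq_mul, fromBlocks_zero_one_mul_apply_inr, mul_assoc α,
    ← mul_sum, sum_mul_maskMat_apply, transpose_mul_fromBlocks_mul_apply, mul_left_comm _ β]
  ring

lemma colIdx_eq_castLE_finProdFinEquiv (M t n : ℕ) (hn : t * (M + 1) ≤ n) (s : Fin t)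
    (j : Fin (M + 1)) : colIdx M t n hn s j = Fin.castLE hn (finProdFinEquiv (s, j)) := by
  ext
  simp only [colIdx, finProdFinEquiv, Equiv.coe_fn_mk, Fin.castLE_mk]
  ring

lemma colIdx_last_add_one (M t n : ℕ) (hn : t * (M + 1) ≤ n) (tl : Fin t)
    (htl : (tl : ℕ) = t - 1) : (colIdx M t n hn tl (Fin.last M) : ℕ) + 1 = t * (M + 1) := by
  simp only [colIdx, Fin.val_last]
  rw [add_assoc, ← add_one_mul, show (tl : ℕ) + 1 = t by omega]

lemma sum_Iic_colIdx_last {R : Type*} [AddCommMonoid R] (M t n : ℕ) (hn : t * (M + 1) ≤ n)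
    (f : Fin n → R) (tl : Fin t) (htl : (tl : ℕ) = t - 1) :
    ∑ c ∈ Iic (colIdx M t n hn tl (Fin.last M)), f c = ∑ s, ∑ j, f (colIdx M t n hn s j) := by
  have hIic : Iic (colIdx M t n hn tl (Fin.last M)) = univ.map (Fin.castLEEmb hn) := by
    ext c
    have hq := colIdx_last_add_one M t n hn tl htl
    simp only [mem_Iic, Fin.le_def, mem_map, mem_univ, true_and]
    constructor
    · intro hc
      exact ⟨⟨c, by omega⟩, rfl⟩
    · rintro ⟨i, rfl⟩
      rw [Fin.coe_castLEEmb, Fin.val_castLE]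
      have := i.isLt
      omega
  rw [hIic, sum_map, ← finProdFinEquiv.sum_comp, Fintype.sum_prod_type]
  simp [colIdx_eq_castLE_finProdFinEquiv]

theorem stmt_1_general (d M t n : ℕ)
    (hn : t * (M + 1) ≤ n)
    (N : ℝ)
    (Λ : Matrix (Fin d) (Fin d) ℝ) (hΛsym : Λ.IsSymm)
    (Γ : Matrix (Fin d) (Fin d) ℝ)
    (hΓ : Γ = (1 + 1 / N) • Λ + (Λ.trace / N) • (1 : Matrix (Fin d) (Fin d) ℝ))
    (a : ℝ) (ha : 0 < a)
    (x : Fin t → Fin M → Fin d → ℝ) (y : Fin t → Fin M → ℝ)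
    (xsq : Fin t → Fin d → ℝ)
    (P : Matrix (Fin d ⊕ Unit) (Fin n) ℝ)
    (hPex : ∀ (s : Fin t) (j : Fin M),
        (∀ k, P (Sum.inl k) (colIdx M t n hn s j.castSucc) = x s j k)
          ∧ P (Sum.inr ()) (colIdx M t n hn s j.castSucc) = y s j)
    (hPq : ∀ s : Fin t,
        (∀ k, P (Sum.inl k) (colIdx M t n hn s (Fin.last M)) = xsq s k)
          ∧ P (Sum.inr ()) (colIdx M t n hn s (Fin.last M)) = 0)
    (Wstar Vstar : Matrix (Fin d ⊕ Unit) (Fin d ⊕ Unit) ℝ)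
    (hW : Wstar = a ^ ((1 : ℝ) / 4) •
        fromBlocks (0 : Matrix (Fin d) (Fin d) ℝ) 0 0 (1 : Matrix Unit Unit ℝ))
    (hV : Vstar = a ^ (-(1 : ℝ) / 4) •
        fromBlocks Γ⁻¹ 0 0 (0 : Matrix Unit Unit ℝ))
    (out : Matrix (Fin d ⊕ Unit) (Fin n) ℝ)
    (hout : out = P + Wstar * P * maskMat (Pᵀ * Vstar * P))
    (tl : Fin t) (htl : (tl : ℕ) = t - 1) :
    out (Sum.inr ()) (colIdx M t n hn tl (Fin.last M))
      = xsq tl ⬝ᵥ (Γ⁻¹ *ᵥ ((1 / ((t : ℝ) * ((M : ℝ) + 1))) • ∑ s, ∑ j, y s j • x s j)) := by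
  have hΓinv : Γ⁻¹.IsSymm := by
    refine IsSymm.inv ?_
    rw [hΓ]
    exact (hΛsym.smul _).add (isSymm_one.smul _)
  have hscale : a ^ ((1 : ℝ) / 4) * a ^ (-(1 : ℝ) / 4) = 1 := by
    rw [← Real.rpow_add ha]; norm_num
  have hcard : ((colIdx M t n hn tl (Fin.last M) : ℕ) : ℝ) + 1 = t * (M + 1) := by
    exact_mod_cast colIdx_last_add_one M t n hn tl htl
  have hxex : ∀ s j, (fun k => P (Sum.inl k) (colIdx M t n hn s j.castSucc)) = x s j :=
    fun s j => funext (hPex s j).1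
  have hxq : (fun k => P (Sum.inl k) (colIdx M t n hn tl (Fin.last M))) = xsq tl :=
    funext (hPq tl).1
  subst hout hW hV
  rw [maskedAttention_apply_inr, sum_Iic_colIdx_last M t n hn _ tl htl, (hPq tl).2, zero_add,
    hscale, one_mul, hcard]
  simp only [Fin.sum_univ_castSucc, (hPq _).2, zero_mul, add_zero, (hPex _ _).2, hxex, hxq,
    mulVec_smul, mulVec_sum, dotProduct_smul, dotProduct_sum, smul_eq_mul,
    hΓinv.dotProduct_mulVec_comm (xsq tl)]
  ring

/-- for masked linear self-attention with the trained parameters, applied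
to a prompt whose first `t(M+1)` columns are, for each task `s = 1,…,t` in order, the
`M` example columns `(x_{s,j}; y_{s,j})` followed by the query column `(x_{s,q}; 0)`,
the label coordinate of column `t(M+1)` (the task-`t` query column) equals
`ŷ_{t,q} = x_{t,q}ᵀ Γ⁻¹ ((1/(t(M+1))) Σ_{s=1}^t Σ_{j=1}^M x_{s,j} y_{s,j})`. -/
theorem stmt_1 (d M t n : ℕ) (hd : 1 ≤ d) (hM : 1 ≤ M) (ht : 1 ≤ t)
    (hn : t * (M + 1) ≤ n)
    (N : ℝ) (hN : 0 < N)
    (Λ : Matrix (Fin d) (Fin d) ℝ) (hΛsym : Λ.IsSymm) (hΛpd : Λ.PosDef)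
    (Γ : Matrix (Fin d) (Fin d) ℝ)
    (hΓ : Γ = (1 + 1 / N) • Λ + (Λ.trace / N) • (1 : Matrix (Fin d) (Fin d) ℝ))
    (a : ℝ) (ha : 0 < a)
    (x : Fin t → Fin M → Fin d → ℝ) (y : Fin t → Fin M → ℝ)
    (xsq : Fin t → Fin d → ℝ)
    (P : Matrix (Fin d ⊕ Unit) (Fin n) ℝ)
    (hPex : ∀ (s : Fin t) (j : Fin M),
        (∀ k, P (Sum.inl k) (colIdx M t n hn s j.castSucc) = x s j k)
          ∧ P (Sum.inr ()) (colIdx M t n hn s j.castSucc) = y s j)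
    (hPq : ∀ s : Fin t,
        (∀ k, P (Sum.inl k) (colIdx M t n hn s (Fin.last M)) = xsq s k)
          ∧ P (Sum.inr ()) (colIdx M t n hn s (Fin.last M)) = 0)
    (Wstar Vstar : Matrix (Fin d ⊕ Unit) (Fin d ⊕ Unit) ℝ)
    (hW : Wstar = a ^ ((1 : ℝ) / 4) •
        fromBlocks (0 : Matrix (Fin d) (Fin d) ℝ) 0 0 (1 : Matrix Unit Unit ℝ))
    (hV : Vstar = a ^ (-(1 : ℝ) / 4) •
        fromBlocks Γ⁻¹ 0 0 (0 : Matrix Unit Unit ℝ))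
    (out : Matrix (Fin d ⊕ Unit) (Fin n) ℝ)
    (hout : out = P + Wstar * P * maskMat (Pᵀ * Vstar * P))
    (tl : Fin t) (htl : (tl : ℕ) = t - 1) :
    out (Sum.inr ()) (colIdx M t n hn tl (Fin.last M))
      = xsq tl ⬝ᵥ (Γ⁻¹ *ᵥ ((1 / ((t : ℝ) * ((M : ℝ) + 1))) • ∑ s, ∑ j, y s j • x s j)) :=
  stmt_1_general d M t n hn N Λ hΛsym Γ hΓ a ha x y xsq P hPex hPq Wstar Vstar hW hV out hout tl htl
end

section
/- Fix d, M, T ≥ 1 and 1 ≤ t ≤ T. On a probability space, let {(x_{s,i}, y_{s,i}) : 1 ≤ s ≤ T, 1 ≤ i ≤ M} and the query input x_{t,q} be mutually independent, where for each s the pairs (x_{s,i}, y_{s,i}) are i.i.d. ℝ^d × ℝ-valued with finite second moments of x_{s,i}y_{s,i}, mean μ_s = E[x_{s,i} y_{s,i}] and covariance Σ_s = Var(x_{s,i} y_{s,i}), and x_{t,q} satisfies E[x_{t,q}] = 0 and E[x_{t,q} x_{t,q}^T] = Λ. Set S_s = Σ_{i=1}^M x_{s,i} y_{s,i}, ŷ_{t,q}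 = x_{t,q}^T Γ^{−1} ((1/(t(M+1))) Σ_{s=1}^t S_s), Ŷ_{t,q} = x_{t,q}^T Γ^{−1} ((1/(T(M+1)+1)) Σ_{s=1}^T S_s), c_t = −((T−t)M + (T+1−t))/(t(M+1)(T(M+1)+1)), d = 1/(T(M+1)+1), and α_i(t) = c_t if i ≤ t and α_i(t) = d if i > t. Then E[(Ŷ_{t,q} − ŷ_{t,q})^2] = Σ_{i=1}^T α_i(t)^2 · tr( (M Σ_i + M^2 μ_i μ_i^T) Γ^{−2} Λ ) + M^2 Σ_{i≠j, 1≤i,j≤T} α_i(t) α_j(t) · tr( μ_i μ_j^T Γ^{−2} Λ ). -/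
/-!
With `α_s = c` for `s < t` and `α_s = d` otherwise, `α_s` is exactly the difference of the weights
with which the two predictions average the task sums (`c = d - 1/(t(M+1))`), so
`Ŷ - ŷ = x_qᵀ Γ⁻¹ w` with `w = Σ_{s,i} α_s x_{s,i} y_{s,i}`. As `x_q` is independent of `w`,
`E[(x_qᵀ Γ⁻¹ w)²] = tr(Λ Γ⁻¹ E[wwᵀ] Γ⁻ᵀ)`, and as the summands of `w` are independent,
`E[wwᵀ] = Σ_{s,i} α_s² Σ_s + E[w]E[w]ᵀ` with `E[w] = M Σ_s α_s μ_s`. Finally `Γ⁻¹` is symmetric and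
commutes with `Λ`, which turns the trace into `tr(E[wwᵀ] Γ⁻² Λ)`.
-/

open MeasureTheory ProbabilityTheory Matrix BigOperators

theorem Matrix.commute_nonsing_inv_left {n R : Type*} [Fintype n] [DecidableEq n] [CommRing R]
    {A B : Matrix n n R} (h : Commute A B) : Commute A⁻¹ B := by
  by_cases hA : IsUnit A.det
  · exact Commute.units_inv_left (u := A.nonsingInvUnit hA) h
  · rw [nonsing_inv_apply_not_isUnit A hA]
    exact Commute.zero_left B

theorem Matrix.trace_mul_conj_of_isSymm_of_commute {n R : Type*} [Fintype n] [CommRing R]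
    {A B : Matrix n n R} (hA : A.IsSymm) (hAB : Commute A B) (C : Matrix n n R) :
    (B * (A * C * Aᵀ)).trace = (C * (A * A) * B).trace :=
  calc (B * (A * C * Aᵀ)).trace = (A * (C * A * B)).trace := by
        rw [hA.eq, trace_mul_comm]
        simp only [Matrix.mul_assoc]
    _ = (C * A * B * A).trace := trace_mul_comm _ _
    _ = (C * (A * A) * B).trace := by
        rw [Matrix.mul_assoc (C * A), ← hAB.eq]
        simp only [Matrix.mul_assoc]

theorem Matrix.vecMulVec_sum_sum {κ κ' m n R : Type*} [Fintype κ] [Fintype κ'] [CommSemiring R]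
    (a : κ → m → R) (b : κ' → n → R) :
    vecMulVec (∑ i, a i) (∑ j, b j) = ∑ i, ∑ j, vecMulVec (a i) (b j) := by
  ext k l
  simp only [vecMulVec_apply, Finset.sum_apply, Matrix.sum_apply, Finset.sum_mul_sum]

theorem smul_sum_sub_smul_sum_filter {κ R V : Type*} [Fintype κ] [Ring R] [AddCommGroup V]
    [Module R V] (p : κ → Prop) [DecidablePred p] (a b : R) (v : κ → V) :
    a • ∑ s, v s - b • ∑ s ∈ Finset.univ.filter p, v s
      = ∑ s, (if p s then a - b else a) • v s := by
  rw [Finset.sum_filter, Finset.smul_sum, Finset.smul_sum, ← Finset.sum_sub_distrib]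
  refine Finset.sum_congr rfl fun s _ => ?_
  split_ifs <;> simp [sub_smul]

theorem one_div_sub_one_div_eq_neg_div (T M t : ℕ) (ht : 1 ≤ t) :
    1 / ((T : ℝ) * ((M : ℝ) + 1) + 1) - 1 / ((t : ℝ) * ((M : ℝ) + 1))
      = -((((T : ℝ) - t) * M + ((T : ℝ) + 1 - t))
          / ((t : ℝ) * ((M : ℝ) + 1) * ((T : ℝ) * ((M : ℝ) + 1) + 1))) := by
  have ht0 : (t : ℝ) ≠ 0 := Nat.cast_ne_zero.mpr (by omega)
  field_simp
  ring

theorem map_sum_sq_smul_add_vecMulVec_sum {κ ν ι : Type*} [Fintype κ] [DecidableEq κ]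
    [Fintype ν] (f : Matrix ι ι ℝ →ₗ[ℝ] ℝ) (α : κ → ℝ) (Sig : κ → Matrix ι ι ℝ)
    (μ : κ → ι → ℝ) :
    f (∑ u : κ × ν, α u.1 ^ 2 • Sig u.1
        + vecMulVec (∑ u : κ × ν, α u.1 • μ u.1) (∑ u : κ × ν, α u.1 • μ u.1))
      = ∑ i, α i ^ 2 * f ((Fintype.card ν : ℝ) • Sig i
          + (Fintype.card ν : ℝ) ^ 2 • vecMulVec (μ i) (μ i))
        + (Fintype.card ν : ℝ) ^ 2 * ∑ i, ∑ j ∈ Finset.univ.erase i,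
            α i * α j * f (vecMulVec (μ i) (μ j)) := by
  simp only [Fintype.sum_prod_type, Finset.sum_const, Finset.card_univ, ← Finset.smul_sum,
    ← Nat.cast_smul_eq_nsmul ℝ]
  simp only [Matrix.vecMulVec_sum_sum, smul_vecMulVec, vecMulVec_smul, map_add, map_sum,
    map_smul, smul_eq_mul, Finset.sum_erase_eq_sub (Finset.mem_univ _), Finset.sum_sub_distrib,
    mul_add, mul_sub, Finset.sum_add_distrib, Finset.mul_sum]
  ring_nf
  exact congrArg _ (Finset.sum_congr rfl fun i _ => Finset.sum_congr rfl fun j _ => by ring)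

theorem ProbabilityTheory.iIndepFun.indepFun_comp_inr_sum_comp_inl {Ω κ β γ : Type*}
    [MeasurableSpace Ω] {P : Measure Ω} [Fintype κ] [MeasurableSpace β] [MeasurableSpace γ] [AddCommMonoid γ]
    [MeasurableAdd₂ γ] {f : κ ⊕ Unit → Ω → β} (h : iIndepFun f P) (hf : ∀ i, Measurable (f i))
    {φ : κ → β → γ} {ψ : β → γ} (hφ : ∀ u, Measurable (φ u)) (hψ : Measurable ψ) :
    IndepFun (fun ω => ψ (f (.inr ()) ω)) (fun ω => ∑ u, φ u (f (.inl u) ω)) P := by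
  let g : κ ⊕ Unit → β → γ := Sum.elim φ fun _ => ψ
  have hg : ∀ i, Measurable (g i) := by
    rintro (u | _)
    exacts [hφ u, hψ]
  have h' := ((h.comp g hg).indepFun_finsetSum_of_notMem (fun i => (hg i).comp (hf i))
    (s := Finset.univ.map .inl) (i := .inr ()) (by simp)).symm
  rwa [Finset.sum_map, Finset.sum_fn] at h'

namespace RandomVector

variable {Ω ι : Type*} [MeasurableSpace Ω] {P : Measure Ω}

noncomputable def mean (P : Measure Ω) (X : Ω → ι → ℝ) : ι → ℝ := fun k => ∫ ω, X ω k ∂P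

noncomputable def secondMoment (P : Measure Ω) (X : Ω → ι → ℝ) : Matrix ι ι ℝ :=
  Matrix.of fun k l => ∫ ω, X ω k * X ω l ∂P

noncomputable def covMatrix (P : Measure Ω) (X : Ω → ι → ℝ) : Matrix ι ι ℝ :=
  secondMoment P X - vecMulVec (mean P X) (mean P X)

theorem mean_const_smul (c : ℝ) (X : Ω → ι → ℝ) :
    mean P (fun ω => c • X ω) = c • mean P X := by
  ext k
  exact integral_const_mul c _

theorem secondMoment_const_smul (c : ℝ) (X : Ω → ι → ℝ) :
    secondMoment P (fun ω => c • X ω) = c ^ 2 • secondMoment P X := by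
  ext k l
  simp only [secondMoment, of_apply, Pi.smul_apply, Matrix.smul_apply, smul_eq_mul]
  rw [← integral_const_mul]
  exact integral_congr_ae (Filter.Eventually.of_forall fun ω => by ring)

theorem covMatrix_const_smul (c : ℝ) (X : Ω → ι → ℝ) :
    covMatrix P (fun ω => c • X ω) = c ^ 2 • covMatrix P X := by
  rw [covMatrix, covMatrix, mean_const_smul, secondMoment_const_smul, smul_sub,
    smul_vecMulVec, vecMulVec_smul, smul_smul, sq]

theorem integral_apply_mul_apply_of_pairwise_indepFun {κ : Type*} {Z : κ → Ω → ι → ℝ}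
    (hZ : ∀ u k, MemLp (fun ω => Z u ω k) 2 P)
    (hind : Pairwise fun u v => IndepFun (Z u) (Z v) P) [DecidableEq κ] (u v : κ) (k l : ι) :
    ∫ ω, Z u ω k * Z v ω l ∂P
      = mean P (Z u) k * mean P (Z v) l + if u = v then covMatrix P (Z u) k l else 0 := by
  by_cases huv : u = v
  · subst huv
    simp [covMatrix, secondMoment, mean, vecMulVec_apply]
  · rw [if_neg huv, add_zero]
    have hkl : IndepFun (fun ω => Z u ω k) (fun ω => Z v ω l) P :=
      (hind huv).comp (measurable_pi_apply k) (measurable_pi_apply l)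
    exact hkl.integral_fun_mul_eq_mul_integral (hZ u k).aestronglyMeasurable
      (hZ v l).aestronglyMeasurable

theorem secondMoment_sum_of_pairwise_indepFun {κ : Type*} [Fintype κ] {Z : κ → Ω → ι → ℝ}
    (hZ : ∀ u k, MemLp (fun ω => Z u ω k) 2 P)
    (hind : Pairwise fun u v => IndepFun (Z u) (Z v) P) :
    secondMoment P (fun ω => ∑ u, Z u ω)
      = ∑ u, covMatrix P (Z u) + vecMulVec (∑ u, mean P (Z u)) (∑ u, mean P (Z u)) := by
  classical
  ext k l
  have hZZ : ∀ u v, Integrable (fun ω => Z u ω k * Z v ω l) P := fun u v =>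
    (hZ u k).integrable_mul (hZ v l)
  calc ∫ ω, (∑ u, Z u ω) k * (∑ u, Z u ω) l ∂P
      = ∫ ω, ∑ u, ∑ v, Z u ω k * Z v ω l ∂P := by
        simp only [Finset.sum_apply, Finset.sum_mul_sum]
    _ = ∑ u, ∑ v, ∫ ω, Z u ω k * Z v ω l ∂P := by
        rw [integral_finsetSum _ fun u _ => integrable_finsetSum _ fun v _ => hZZ u v]
        exact Finset.sum_congr rfl fun u _ => integral_finsetSum _ fun v _ => hZZ u v
    _ = ∑ u, ∑ v, (mean P (Z u) k * mean P (Z v) l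
          + if u = v then covMatrix P (Z u) k l else 0) := by
        simp only [integral_apply_mul_apply_of_pairwise_indepFun hZ hind]
    _ = _ := by
        simp only [Finset.sum_add_distrib, Finset.sum_ite_eq, Finset.mem_univ, if_true,
          Matrix.add_apply, Matrix.sum_apply, vecMulVec_apply, Finset.sum_apply,
          Finset.sum_mul_sum]
        ring

variable [Fintype ι]

theorem memLp_mulVec {ι' : Type*} {p : ENNReal} (A : Matrix ι' ι ℝ) {X : Ω → ι → ℝ}
    (hX : ∀ k, MemLp (fun ω => X ω k) p P) (k : ι') :
    MemLp (fun ω => (A *ᵥ X ω) k) p P := by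
  simp only [mulVec, dotProduct]
  exact memLp_finsetSum _ fun l _ => (hX l).const_mul (A k l)

theorem secondMoment_mulVec {ι' : Type*} (A : Matrix ι' ι ℝ) {X : Ω → ι → ℝ}
    (hX : ∀ k, MemLp (fun ω => X ω k) 2 P) :
    secondMoment P (fun ω => A *ᵥ X ω) = A * secondMoment P X * Aᵀ := by
  ext k l
  have hXX : ∀ i j, Integrable (fun ω => X ω i * X ω j) P := fun i j =>
    (hX i).integrable_mul (hX j)
  calc ∫ ω, (A *ᵥ X ω) k * (A *ᵥ X ω) l ∂P
      = ∫ ω, ∑ j, ∑ i, A k i * A l j * (X ω i * X ω j) ∂P := by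
        refine integral_congr_ae (Filter.Eventually.of_forall fun ω => ?_)
        simp only [mulVec, dotProduct, Finset.sum_mul_sum]
        rw [Finset.sum_comm]
        exact Finset.sum_congr rfl fun _ _ => Finset.sum_congr rfl fun _ _ => by ring
    _ = ∑ j, ∑ i, A k i * A l j * ∫ ω, X ω i * X ω j ∂P := by
        rw [integral_finsetSum _ fun j _ => integrable_finsetSum _ fun i _ =>
          (hXX i j).const_mul _]
        refine Finset.sum_congr rfl fun j _ => ?_
        rw [integral_finsetSum _ fun i _ => (hXX i j).const_mul _]
        exact Finset.sum_congr rfl fun i _ => integral_const_mul _ _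
    _ = (A * secondMoment P X * Aᵀ) k l := by
        simp only [mul_apply, transpose_apply, secondMoment, of_apply, Finset.sum_mul]
        exact Finset.sum_congr rfl fun _ _ => Finset.sum_congr rfl fun _ _ => by ring

theorem integral_dotProduct_sq_of_indepFun {X W : Ω → ι → ℝ} (hXW : IndepFun X W P)
    (hX : ∀ k, MemLp (fun ω => X ω k) 2 P) (hW : ∀ k, MemLp (fun ω => W ω k) 2 P) :
    ∫ ω, (X ω ⬝ᵥ W ω) ^ 2 ∂P = (secondMoment P X * secondMoment P W).trace := by
  have hind : ∀ k l, IndepFun (fun ω => X ω k * X ω l) (fun ω => W ω k * W ω l) P :=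
    fun k l => by
      have hkl : Measurable fun v : ι → ℝ => v k * v l := by fun_prop
      exact hXW.comp hkl hkl
  have hXX : ∀ k l, Integrable (fun ω => X ω k * X ω l) P := fun k l =>
    (hX k).integrable_mul (hX l)
  have hWW : ∀ k l, Integrable (fun ω => W ω k * W ω l) P := fun k l =>
    (hW k).integrable_mul (hW l)
  have hterm : ∀ k l, Integrable (fun ω => X ω k * X ω l * (W ω k * W ω l)) P := fun k l =>
    (hind k l).integrable_mul (hXX k l) (hWW k l)
  calc ∫ ω, (X ω ⬝ᵥ W ω) ^ 2 ∂P
      = ∫ ω, ∑ k, ∑ l, X ω k * X ω l * (W ω k * W ω l) ∂P := by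
        refine integral_congr_ae (Filter.Eventually.of_forall fun ω => ?_)
        simp only [dotProduct, sq, Finset.sum_mul_sum]
        exact Finset.sum_congr rfl fun _ _ => Finset.sum_congr rfl fun _ _ => by ring
    _ = ∑ k, ∑ l, (∫ ω, X ω k * X ω l ∂P) * ∫ ω, W ω k * W ω l ∂P := by
        rw [integral_finsetSum _ fun k _ => integrable_finsetSum _ fun l _ => hterm k l]
        refine Finset.sum_congr rfl fun k _ => ?_
        rw [integral_finsetSum _ fun l _ => hterm k l]
        exact Finset.sum_congr rfl fun l _ => (hind k l).integral_fun_mul_eq_mul_integral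
          (hXX k l).aestronglyMeasurable (hWW k l).aestronglyMeasurable
    _ = (secondMoment P X * secondMoment P W).trace := by
        simp only [trace, diag, mul_apply, secondMoment, of_apply]
        exact Finset.sum_congr rfl fun k _ => Finset.sum_congr rfl fun l _ => by
          rw [integral_congr_ae (Filter.Eventually.of_forall fun ω => mul_comm (W ω l) (W ω k))]

theorem integral_dotProduct_mulVec_sum_sq {ι' κ : Type*} [Fintype ι'] [Fintype κ]
    {X : Ω → ι' → ℝ} {Z : κ → Ω → ι → ℝ} (A : Matrix ι' ι ℝ)
    (hXZ : IndepFun X (fun ω => A *ᵥ ∑ u, Z u ω) P)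
    (hZind : Pairwise fun u v => IndepFun (Z u) (Z v) P)
    (hX : ∀ k, MemLp (fun ω => X ω k) 2 P) (hZ : ∀ u k, MemLp (fun ω => Z u ω k) 2 P) :
    ∫ ω, (X ω ⬝ᵥ (A *ᵥ ∑ u, Z u ω)) ^ 2 ∂P
      = (secondMoment P X * (A * (∑ u, covMatrix P (Z u)
          + vecMulVec (∑ u, mean P (Z u)) (∑ u, mean P (Z u))) * Aᵀ)).trace := by
  have hW : ∀ k, MemLp (fun ω => (∑ u, Z u ω) k) 2 P := fun k => by
    simp only [Finset.sum_apply]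
    exact memLp_finsetSum _ fun u _ => hZ u k
  rw [integral_dotProduct_sq_of_indepFun hXZ hX (memLp_mulVec A hW), secondMoment_mulVec A hW,
    secondMoment_sum_of_pairwise_indepFun hZ hZind]

end RandomVector

open RandomVector

theorem stmt_12_general (d M T t : ℕ) (ht1 : 1 ≤ t)
    (Ω : Type*) [MeasurableSpace Ω] (P : Measure Ω)
    (x : Fin T → Fin M → Ω → Fin d → ℝ) (y : Fin T → Fin M → Ω → ℝ)
    (xq : Ω → Fin d → ℝ)
    (hxmeas : ∀ s i, Measurable (x s i)) (hymeas : ∀ s i, Measurable (y s i))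
    (hxqmeas : Measurable xq)
    (hindep : iIndepFun (β := fun _ : (Fin T × Fin M) ⊕ Unit => (Fin d → ℝ) × ℝ)
        (Sum.elim (fun p ω => (x p.1 p.2 ω, y p.1 p.2 ω))
          (fun _ ω => (xq ω, (0 : ℝ)))) P)
    (h2 : ∀ s i k, MemLp (fun ω => x s i ω k * y s i ω) 2 P)
    (hxq2 : ∀ k, MemLp (fun ω => xq ω k) 2 P)
    (Λ : Matrix (Fin d) (Fin d) ℝ) (hΛsym : Λ.IsSymm)
    (hΛ : ∀ k l, ∫ ω, xq ω k * xq ω l ∂P = Λ k l)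
    (N : ℝ)
    (Γ : Matrix (Fin d) (Fin d) ℝ)
    (hΓ : Γ = (1 + 1 / N) • Λ + (Λ.trace / N) • (1 : Matrix (Fin d) (Fin d) ℝ))
    (μ : Fin T → Fin d → ℝ)
    (hμ : ∀ s i, μ s = fun k => ∫ ω, x s i ω k * y s i ω ∂P)
    (Sig : Fin T → Matrix (Fin d) (Fin d) ℝ)
    (hSig : ∀ s i, Sig s = Matrix.of fun k l =>
        (∫ ω, (x s i ω k * y s i ω) * (x s i ω l * y s i ω) ∂P) - μ s k * μ s l)
    (S : Fin T → Ω → Fin d → ℝ) (hS : ∀ s ω, S s ω = ∑ i, y s i ω • x s i ω)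
    (yhat Yhat : Ω → ℝ)
    (hyhat : ∀ ω, yhat ω = xq ω ⬝ᵥ (Γ⁻¹ *ᵥ ((1 / ((t : ℝ) * ((M : ℝ) + 1))) •
        ∑ s ∈ Finset.univ.filter (fun s : Fin T => (s : ℕ) < t), S s ω)))
    (hYhat : ∀ ω, Yhat ω = xq ω ⬝ᵥ (Γ⁻¹ *ᵥ
        ((1 / ((T : ℝ) * ((M : ℝ) + 1) + 1)) • ∑ s, S s ω)))
    (c dd : ℝ)
    (hc : c = -((((T : ℝ) - t) * M + ((T : ℝ) + 1 - t))
        / ((t : ℝ) * ((M : ℝ) + 1) * ((T : ℝ) * ((M : ℝ) + 1) + 1))))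
    (hdd : dd = 1 / ((T : ℝ) * ((M : ℝ) + 1) + 1))
    (αc : Fin T → ℝ) (hαc : ∀ i : Fin T, αc i = if (i : ℕ) < t then c else dd) :
    ∫ ω, (Yhat ω - yhat ω) ^ 2 ∂P
      = ∑ i, (αc i) ^ 2 *
            (((M : ℝ) • Sig i + ((M : ℝ) ^ 2) • vecMulVec (μ i) (μ i))
              * (Γ⁻¹ * Γ⁻¹) * Λ).trace
        + (M : ℝ) ^ 2 * ∑ i, ∑ j ∈ Finset.univ.erase i,
            αc i * αc j * (vecMulVec (μ i) (μ j) * (Γ⁻¹ * Γ⁻¹) * Λ).trace := by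
  set A := Γ⁻¹
  have hA : A.IsSymm := (hΓ ▸ (hΛsym.smul _).add (isSymm_one.smul _) : Γ.IsSymm).inv
  have hAΛ : Commute A Λ := commute_nonsing_inv_left <| hΓ ▸
    ((Commute.refl Λ).smul_left _).add_left ((Commute.one_left Λ).smul_left _)
  let z : Fin T × Fin M → Ω → Fin d → ℝ := fun u ω k => x u.1 u.2 ω k * y u.1 u.2 ω
  let Z : Fin T × Fin M → Ω → Fin d → ℝ := fun u ω => αc u.1 • z u ω
  have hdiff : ∀ ω, Yhat ω - yhat ω = xq ω ⬝ᵥ (A *ᵥ ∑ u, Z u ω) := fun ω => by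
    have hα : ∀ s : Fin T,
        (if (s : ℕ) < t then dd - 1 / ((t : ℝ) * ((M : ℝ) + 1)) else dd) = αc s := fun s => by
      rw [hαc, hc, hdd, one_div_sub_one_div_eq_neg_div T M t ht1]
    have hyx : ∀ s i, y s i ω • x s i ω = z (s, i) ω := fun _ _ => funext fun _ => mul_comm _ _
    rw [hYhat, hyhat, ← hdd, ← dotProduct_sub, ← mulVec_sub, smul_sum_sub_smul_sum_filter]
    simp only [hα, hS, hyx, Fintype.sum_prod_type, Finset.smul_sum, Z]
  have hmeas : ∀ i, Measurable (Sum.elim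
      (fun (p : Fin T × Fin M) ω => (x p.1 p.2 ω, y p.1 p.2 ω))
      (fun (_ : Unit) ω => (xq ω, (0 : ℝ))) i) := by
    rintro (u | _) <;> dsimp only [Sum.elim_inl, Sum.elim_inr] <;> fun_prop
  have hZmeas : ∀ u : Fin T × Fin M,
      Measurable fun p : (Fin d → ℝ) × ℝ => αc u.1 • fun k => p.1 k * p.2 := by
    fun_prop
  have hqind : IndepFun xq (fun ω => A *ᵥ ∑ u, Z u ω) P :=
    (hindep.indepFun_comp_inr_sum_comp_inl hmeas hZmeas measurable_fst).comp measurable_id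
      (continuous_const.matrix_mulVec continuous_id).measurable
  have hZind : Pairwise fun u v => IndepFun (Z u) (Z v) P := fun u v huv =>
    (hindep.indepFun (Sum.inl_injective.ne huv)).comp (hZmeas u) (hZmeas v)
  have hzmean : ∀ u, mean P (z u) = μ u.1 := fun u => by
    rw [hμ u.1 u.2]
    rfl
  have hzcov : ∀ u, covMatrix P (z u) = Sig u.1 := fun u => by
    rw [covMatrix, hzmean, hSig u.1 u.2]
    rfl
  simp only [hdiff]
  rw [integral_dotProduct_mulVec_sum_sq A hqind hZind hxq2
    (fun u k => (h2 u.1 u.2 k).const_mul (αc u.1)), (Matrix.ext hΛ : secondMoment P xq = Λ),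
    trace_mul_conj_of_isSymm_of_commute hA hAΛ]
  simp only [Z, covMatrix_const_smul, mean_const_smul, hzmean, hzcov]
  simpa only [Fintype.card_fin, LinearMap.comp_apply, LinearMap.mulRight_apply,
    traceLinearMap_apply] using map_sum_sq_smul_add_vecMulVec_sum (ν := Fin M)
      ((traceLinearMap (Fin d) ℝ ℝ).comp
        ((LinearMap.mulRight ℝ Λ).comp (LinearMap.mulRight ℝ (A * A)))) αc Sig μ

/-- Interference between the task-`t` query and the final query:
with mutually independent in-context pairs (i.i.d. within each task) and an
independent query input `x_{t,q}` with `E[x_{t,q}] = 0`, `E[x_{t,q}x_{t,q}ᵀ] = Λ`,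
and `ŷ_{t,q}`, `Ŷ_{t,q}` the task-`t` and final-query predictions,
`E[(Ŷ−ŷ)²] = Σ_i α_i(t)² tr((MΣ_i + M²μ_iμ_iᵀ)Γ⁻²Λ)
 + M² Σ_{i≠j} α_i(t)α_j(t) tr(μ_iμ_jᵀΓ⁻²Λ)`,
where `α_i(t) = c_t` for `i ≤ t` and `= d` for `i > t`. -/
theorem stmt_12 (d M T t : ℕ) (hd : 1 ≤ d) (hM : 1 ≤ M) (hT : 1 ≤ T)
    (ht1 : 1 ≤ t) (htT : t ≤ T)
    (Ω : Type*) [MeasurableSpace Ω] (P : Measure Ω) [IsProbabilityMeasure P]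
    (x : Fin T → Fin M → Ω → Fin d → ℝ) (y : Fin T → Fin M → Ω → ℝ)
    (xq : Ω → Fin d → ℝ)
    (hxmeas : ∀ s i, Measurable (x s i)) (hymeas : ∀ s i, Measurable (y s i))
    (hxqmeas : Measurable xq)
    (hindep : iIndepFun (β := fun _ : (Fin T × Fin M) ⊕ Unit => (Fin d → ℝ) × ℝ)
        (Sum.elim (fun p ω => (x p.1 p.2 ω, y p.1 p.2 ω))
          (fun _ ω => (xq ω, (0 : ℝ)))) P)
    (hiid : ∀ s i j, IdentDistrib (fun ω => (x s i ω, y s i ω))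
        (fun ω => (x s j ω, y s j ω)) P P)
    (h2 : ∀ s i k, MemLp (fun ω => x s i ω k * y s i ω) 2 P)
    (hxq2 : ∀ k, MemLp (fun ω => xq ω k) 2 P)
    (hqmean : ∀ k, ∫ ω, xq ω k ∂P = 0)
    (Λ : Matrix (Fin d) (Fin d) ℝ) (hΛpd : Λ.PosDef) (hΛsym : Λ.IsSymm)
    (hΛ : ∀ k l, ∫ ω, xq ω k * xq ω l ∂P = Λ k l)
    (N : ℝ) (hN : 0 < N)
    (Γ : Matrix (Fin d) (Fin d) ℝ)
    (hΓ : Γ = (1 + 1 / N) • Λ + (Λ.trace / N) • (1 : Matrix (Fin d) (Fin d) ℝ))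
    (μ : Fin T → Fin d → ℝ)
    (hμ : ∀ s i, μ s = fun k => ∫ ω, x s i ω k * y s i ω ∂P)
    (Sig : Fin T → Matrix (Fin d) (Fin d) ℝ)
    (hSig : ∀ s i, Sig s = Matrix.of fun k l =>
        (∫ ω, (x s i ω k * y s i ω) * (x s i ω l * y s i ω) ∂P) - μ s k * μ s l)
    (S : Fin T → Ω → Fin d → ℝ) (hS : ∀ s ω, S s ω = ∑ i, y s i ω • x s i ω)
    (yhat Yhat : Ω → ℝ)
    (hyhat : ∀ ω, yhat ω = xq ω ⬝ᵥ (Γ⁻¹ *ᵥ ((1 / ((t : ℝ) * ((M : ℝ) + 1))) •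
        ∑ s ∈ Finset.univ.filter (fun s : Fin T => (s : ℕ) < t), S s ω)))
    (hYhat : ∀ ω, Yhat ω = xq ω ⬝ᵥ (Γ⁻¹ *ᵥ
        ((1 / ((T : ℝ) * ((M : ℝ) + 1) + 1)) • ∑ s, S s ω)))
    (c dd : ℝ)
    (hc : c = -((((T : ℝ) - t) * M + ((T : ℝ) + 1 - t))
        / ((t : ℝ) * ((M : ℝ) + 1) * ((T : ℝ) * ((M : ℝ) + 1) + 1))))
    (hdd : dd = 1 / ((T : ℝ) * ((M : ℝ) + 1) + 1))
    (αc : Fin T → ℝ) (hαc : ∀ i : Fin T, αc i = if (i : ℕ) < t then c else dd) :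
    ∫ ω, (Yhat ω - yhat ω) ^ 2 ∂P
      = ∑ i, (αc i) ^ 2 *
            (((M : ℝ) • Sig i + ((M : ℝ) ^ 2) • vecMulVec (μ i) (μ i))
              * (Γ⁻¹ * Γ⁻¹) * Λ).trace
        + (M : ℝ) ^ 2 * ∑ i, ∑ j ∈ Finset.univ.erase i,
            αc i * αc j * (vecMulVec (μ i) (μ j) * (Γ⁻¹ * Γ⁻¹) * Λ).trace :=
  stmt_12_general d M T t ht1 Ω P x y xq hxmeas hymeas hxqmeas hindep h2 hxq2 Λ hΛsym hΛ N Γ hΓ μ hμ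
    Sig hSig S hS yhat Yhat hyhat hYhat c dd hc hdd αc hαc
end

section
/- Fix d, M, T ≥ 1 and 1 ≤ t ≤ T. On a probability space, let {(x_{s,i}, y_{s,i}) : 1 ≤ s ≤ T, 1 ≤ i ≤ M} and the query pair (x_{t,q}, y_{t,q}) be mutually independent ℝ^d × ℝ-valued random pairs with finite second moments of x_{s,i}y_{s,i}, such that for each s the pairs (x_{s,i}, y_{s,i}) are i.i.d. with mean μ_s = E[x_{s,i} y_{s,i}] and covariance Σ_s = Var(x_{s,i} y_{s,i}), the query pair has the same distribution as the task-t pairs, E[x_{t,q}] = 0 and E[x_{t,q} x_{t,q}^T] = Λ. Define Ŷ_{t,q} = x_{t,q}^T Γ^{−1} ( (1/(T(M+1)+1)) Σ_{s=1}^T Σ_{i=1}^M x_{s,i} y_{s,i} ), β = M/(T(M+1)+1), a = Λ^{−1} μ_t, b = Γ^{−1} β Σ_{s=1}^T μ_s. Then E[(Ŷ_{t,q} − y_{t,q})^2] = min_{w ∈ ℝ^d} E[(w^T x_{t,q} − y_{t,q})^2] + (M/(T(M+1)+1)^2) Σ_{s=1}^T tr(Σ_s Γ^{−2} Λ) + (b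 − a)^T Λ (b − a), and writing Λ = Σ_i λ_i u_i u_i^T, s_i = u_i^T Σ_{s=1}^T μ_s, m_i = u_i^T μ_t, the last term equals Σ_{i=1}^d (1/λ_i) ( (λ_i(β s_i − m_i) − m_i (λ_i + tr(Λ))/N) / (λ_i + (λ_i + tr(Λ))/N) )^2. -/
open MeasureTheory ProbabilityTheory Matrix BigOperators

/-!
Write `R(w) = E[(wᵀx - y)²]` for the population risk of the query pair. Expanding the square, the
risk of `x ↦ xᵀV` for a random weight vector `V` independent of `(x, y)` is `R(EV) + tr(Λ Cov V)`,
and since `Λa = E[xy]`, `R(w) = R(a) + (w - a)ᵀΛ(w - a)`. The estimator is of this form with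
`V = c Γ⁻¹ Σ_{s,i} x_{s,i} y_{s,i}`, `c = 1/(T(M+1)+1)`: then `EV = b` and, the context pairs being
independent, `Cov V = c² M Γ⁻¹ (Σ_s Σ_s) Γ⁻¹`. Finally `Λ` and `Γ` are diagonal in the eigenbasis
`(u_i)`, so `Γ⁻¹` is symmetric and commutes with `Λ`, and the bias term splits over
eigen-coordinates.
-/

section Spectral

variable {n R : Type*} [Fintype n] [CommRing R]

lemma trace_mul_smul_mul_mul_smul_transpose {Λ G : Matrix n n R} (hG : Gᵀ = G)
    (h : Commute Λ G) (c : R) (S : Matrix n n R) :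
    (Λ * (c • G * S * (c • G)ᵀ)).trace = c ^ 2 * (S * (G * G) * Λ).trace := by
  rw [transpose_smul, hG]
  simp only [Matrix.smul_mul, Matrix.mul_smul, smul_smul, trace_smul, smul_eq_mul]
  congr 1
  · ring
  calc (Λ * (G * S * G)).trace = (G * (S * (G * Λ))).trace := by
        rw [trace_mul_comm]; simp only [Matrix.mul_assoc]
    _ = (S * (G * Λ) * G).trace := trace_mul_comm _ _
    _ = (S * (G * G) * Λ).trace := by
        rw [← h.eq]; simp only [Matrix.mul_assoc, h.eq]

variable [DecidableEq n]

lemma sum_smul_vecMulVec_eq (u : n → n → R) (f : n → R) :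
    ∑ i, f i • vecMulVec (u i) (u i) = (of u)ᵀ * diagonal f * of u := by
  ext k l
  simp only [Matrix.sum_apply, Matrix.smul_apply, vecMulVec_apply, smul_eq_mul, Matrix.mul_apply,
    transpose_apply, of_apply, diagonal_apply, mul_ite, mul_zero, Finset.sum_ite_eq',
    Finset.mem_univ, if_true]
  exact Finset.sum_congr rfl fun i _ => by ring

lemma of_mul_transpose_eq_one {u : n → n → R}
    (hu : ∀ i j, u i ⬝ᵥ u j = if i = j then 1 else 0) : of u * (of u)ᵀ = 1 := by
  ext i j
  simpa [Matrix.mul_apply, Matrix.one_apply, dotProduct] using hu i j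

variable {U : Matrix n n R}

lemma conj_diagonal_mul_conj_diagonal (hU : U * Uᵀ = 1) (f g : n → R) :
    (Uᵀ * diagonal f * U) * (Uᵀ * diagonal g * U) = Uᵀ * diagonal (fun i => f i * g i) * U := by
  rw [← diagonal_mul_diagonal]
  simp only [Matrix.mul_assoc]
  rw [← Matrix.mul_assoc U, hU, Matrix.one_mul]

lemma transpose_conj_diagonal (f : n → R) : (Uᵀ * diagonal f * U)ᵀ = Uᵀ * diagonal f * U := by
  simp [transpose_mul, Matrix.mul_assoc]

lemma commute_conj_diagonal (hU : U * Uᵀ = 1) (f g : n → R) :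
    Commute (Uᵀ * diagonal f * U) (Uᵀ * diagonal g * U) := by
  rw [Commute, SemiconjBy, conj_diagonal_mul_conj_diagonal hU, conj_diagonal_mul_conj_diagonal hU]
  simp only [mul_comm]

lemma trace_conj_diagonal (hU : U * Uᵀ = 1) (f : n → R) :
    (Uᵀ * diagonal f * U).trace = ∑ i, f i := by
  rw [trace_mul_comm, ← Matrix.mul_assoc, hU, Matrix.one_mul, trace_diagonal]

lemma smul_conj_diagonal_add_smul_one (hU : U * Uᵀ = 1) (f : n → R) (c₁ c₂ : R) :
    c₁ • (Uᵀ * diagonal f * U) + c₂ • (1 : Matrix n n R)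
      = Uᵀ * diagonal (fun i => c₁ * f i + c₂) * U := by
  have hdiag : diagonal (fun i => c₁ * f i + c₂) = c₁ • diagonal f + c₂ • (1 : Matrix n n R) := by
    ext i j
    by_cases h : i = j <;> simp [one_apply, h]
  rw [hdiag, Matrix.mul_add, Matrix.add_mul, Matrix.mul_smul, Matrix.smul_mul, Matrix.mul_smul,
    Matrix.smul_mul, Matrix.mul_one, mul_eq_one_comm.mp hU]

lemma dotProduct_conj_diagonal_mulVec (hU : U * Uᵀ = 1) (f w : n → R) :
    (Uᵀ *ᵥ w) ⬝ᵥ ((Uᵀ * diagonal f * U) *ᵥ (Uᵀ *ᵥ w)) = ∑ i, f i * w i ^ 2 := by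
  rw [mulVec_mulVec, Matrix.mul_assoc, Matrix.mul_assoc, hU, Matrix.mul_one, ← mulVec_mulVec,
    dotProduct_mulVec, vecMul_transpose, mulVec_mulVec, hU, one_mulVec]
  simp only [dotProduct, mulVec_diagonal]
  exact Finset.sum_congr rfl fun i _ => by ring

lemma dotProduct_conj_diagonal_mulVec_sub (hU : U * Uᵀ = 1) (f g h v w : n → R) :
    ((Uᵀ * diagonal f * U) *ᵥ v - (Uᵀ * diagonal g * U) *ᵥ w)
        ⬝ᵥ (Uᵀ * diagonal h * U) *ᵥ ((Uᵀ * diagonal f * U) *ᵥ v - (Uᵀ * diagonal g * U) *ᵥ w)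
      = ∑ i, h i * (f i * (U *ᵥ v) i - g i * (U *ᵥ w) i) ^ 2 := by
  have hsub : (Uᵀ * diagonal f * U) *ᵥ v - (Uᵀ * diagonal g * U) *ᵥ w
      = Uᵀ *ᵥ (fun i => f i * (U *ᵥ v) i - g i * (U *ᵥ w) i) := by
    simp only [← mulVec_mulVec, ← mulVec_sub]
    congr 1
    ext i
    simp only [Pi.sub_apply, mulVec_diagonal]
  rw [hsub, dotProduct_conj_diagonal_mulVec hU]

end Spectral

lemma inv_conj_diagonal {n K : Type*} [Fintype n] [DecidableEq n] [Field K] {U : Matrix n n K}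
    (hU : U * Uᵀ = 1) {f : n → K} (hf : ∀ i, f i ≠ 0) :
    (Uᵀ * diagonal f * U)⁻¹ = Uᵀ * diagonal (fun i => (f i)⁻¹) * U := by
  refine inv_eq_right_inv ?_
  rw [conj_diagonal_mul_conj_diagonal hU]
  simp only [mul_inv_cancel₀ (hf _), diagonal_one, Matrix.mul_one]
  exact mul_eq_one_comm.mp hU

lemma dotProduct_mulVec_sub_two_mul_eq {n : Type*} [Fintype n] {Λ : Matrix n n ℝ} (hΛ : Λ.IsSymm)
    {a μ : n → ℝ} (ha : Λ *ᵥ a = μ) (w : n → ℝ) :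
    w ⬝ᵥ Λ *ᵥ w - 2 * (w ⬝ᵥ μ)
      = a ⬝ᵥ Λ *ᵥ a - 2 * (a ⬝ᵥ μ) + (w - a) ⬝ᵥ Λ *ᵥ (w - a) := by
  have hsymm : a ⬝ᵥ Λ *ᵥ w = w ⬝ᵥ Λ *ᵥ a := by
    rw [dotProduct_mulVec, dotProduct_comm, ← mulVec_transpose, hΛ.eq]
  rw [← ha, mulVec_sub, dotProduct_sub, sub_dotProduct, sub_dotProduct, hsymm]
  ring

lemma dotProduct_mulVec_eq_sum {n : Type*} [Fintype n] (v : n → ℝ) (Λ : Matrix n n ℝ)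
    (w : n → ℝ) : v ⬝ᵥ Λ *ᵥ w = ∑ k, ∑ l, Λ k l * (v k * w l) := by
  simp only [dotProduct, mulVec, Finset.mul_sum]
  exact Finset.sum_congr rfl fun k _ => Finset.sum_congr rfl fun l _ => by ring

lemma dotProduct_sub_sq {n : Type*} [Fintype n] (x v : n → ℝ) (y : ℝ) :
    (x ⬝ᵥ v - y) ^ 2
      = ∑ k, ∑ l, (x k * x l) * (v k * v l) - 2 * ∑ k, (x k * y) * v k + y ^ 2 := by
  simp only [dotProduct, sub_sq, sq (∑ k, _), Finset.sum_mul, Finset.mul_sum]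
  congr 2
  · exact Finset.sum_congr rfl fun k _ => Finset.sum_congr rfl fun l _ => by ring
  · exact Finset.sum_congr rfl fun k _ => by ring

lemma sum_prod_fst {α β M : Type*} [Fintype α] [Fintype β] [AddCommMonoid M] (f : α → M) :
    ∑ p : α × β, f p.1 = Fintype.card β • ∑ a, f a := by
  rw [Fintype.sum_prod_type, Finset.smul_sum]
  simp

lemma ProbabilityTheory.iIndepFun.indepFun_sum_elim_unit {Ω κ β : Type*} [MeasurableSpace Ω]
    {P : Measure Ω} [Fintype κ] [MeasurableSpace β] {f : κ → Ω → β} {g : Ω → β}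
    (h : iIndepFun (Sum.elim f fun _ : Unit => g) P) (hf : ∀ p, Measurable (f p))
    (hg : Measurable g) :
    IndepFun g (fun ω p => f p ω) P := by
  classical
  have hdisj : Disjoint ({Sum.inr ()} : Finset (κ ⊕ Unit)) (Finset.univ.image Sum.inl) := by
    simp
  have hmeas : ∀ j, Measurable (Sum.elim f (fun _ : Unit => g) j) := by
    rintro (p | _)
    exacts [hf p, hg]
  exact (h.indepFun_finset _ _ hdisj hmeas).comp (measurable_pi_apply ⟨Sum.inr (), by simp⟩)
    (measurable_pi_lambda _ fun p => measurable_pi_apply ⟨Sum.inl p, by simp⟩)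

noncomputable def covarianceMatrix {Ω ι : Type*} [MeasurableSpace Ω] (W : Ω → ι → ℝ)
    (P : Measure Ω) : Matrix ι ι ℝ :=
  of fun k l => cov[fun ω => W ω k, fun ω => W ω l; P]

section Moments

variable {Ω ι : Type*} [MeasurableSpace Ω] {P : Measure Ω}

theorem covarianceMatrix_sum_of_pairwise_indepFun [IsFiniteMeasure P] {κ : Type*} [Fintype κ]
    {Z : κ → Ω → ι → ℝ} (hind : Pairwise fun p q => IndepFun (Z p) (Z q) P)
    (hZ : ∀ p k, MemLp (fun ω => Z p ω k) 2 P) :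
    covarianceMatrix (fun ω => ∑ p, Z p ω) P = ∑ p, covarianceMatrix (Z p) P := by
  classical
  ext k l
  simp only [covarianceMatrix, of_apply, Finset.sum_apply, Matrix.sum_apply]
  rw [covariance_fun_sum_fun_sum (fun p => hZ p k) (fun p => hZ p l)]
  refine Finset.sum_congr rfl fun p _ => Finset.sum_eq_single p (fun q _ hqp => ?_) (by simp)
  exact ((hind hqp.symm).comp (measurable_pi_apply k) (measurable_pi_apply l)).covariance_eq_zero
    (hZ p k) (hZ q l)

variable [Fintype ι]

theorem integral_sq_dotProduct_sub_of_indepFun [IsProbabilityMeasure P] {X V : Ω → ι → ℝ}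
    {Y : Ω → ℝ} {Λ : Matrix ι ι ℝ} {μ : ι → ℝ}
    (hind : IndepFun (fun ω => (X ω, Y ω)) V P)
    (hX : ∀ k, MemLp (fun ω => X ω k) 2 P) (hY : MemLp Y 2 P)
    (hV : ∀ k, MemLp (fun ω => V ω k) 2 P)
    (hΛ : ∀ k l, ∫ ω, X ω k * X ω l ∂P = Λ k l) (hμ : ∀ k, ∫ ω, X ω k * Y ω ∂P = μ k) :
    ∫ ω, (X ω ⬝ᵥ V ω - Y ω) ^ 2 ∂P
      = ∑ k, ∑ l, Λ k l * ∫ ω, V ω k * V ω l ∂P - 2 * ∑ k, μ k * ∫ ω, V ω k ∂P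
        + ∫ ω, Y ω ^ 2 ∂P := by
  have hquad k l : IndepFun (fun ω => X ω k * X ω l) (fun ω => V ω k * V ω l) P :=
    hind.comp (φ := fun p : (ι → ℝ) × ℝ => p.1 k * p.1 l) (ψ := fun v : ι → ℝ => v k * v l)
      (by fun_prop) (by fun_prop)
  have hlin k : IndepFun (fun ω => X ω k * Y ω) (fun ω => V ω k) P :=
    hind.comp (φ := fun p : (ι → ℝ) × ℝ => p.1 k * p.2) (by fun_prop) (measurable_pi_apply k)
  have hint_quad k l : Integrable (fun ω => (X ω k * X ω l) * (V ω k * V ω l)) P :=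
    (hquad k l).integrable_mul ((hX k).integrable_mul (hX l)) ((hV k).integrable_mul (hV l))
  have hint_lin k : Integrable (fun ω => (X ω k * Y ω) * V ω k) P :=
    (hlin k).integrable_mul ((hX k).integrable_mul hY) ((hV k).integrable one_le_two)
  simp_rw [dotProduct_sub_sq]
  have hint_sum_quad : Integrable (fun ω => ∑ k, ∑ l, (X ω k * X ω l) * (V ω k * V ω l)) P :=
    integrable_finsetSum _ fun k _ => integrable_finsetSum _ fun l _ => hint_quad k l
  have hint_sum_lin : Integrable (fun ω => 2 * ∑ k, (X ω k * Y ω) * V ω k) P :=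
    (integrable_finsetSum _ fun k _ => hint_lin k).const_mul 2
  rw [integral_add (by exact hint_sum_quad.sub hint_sum_lin) hY.integrable_sq,
    integral_sub hint_sum_quad hint_sum_lin, integral_const_mul,
    integral_finsetSum _ fun k _ => integrable_finsetSum _ fun l _ => hint_quad k l,
    integral_finsetSum _ fun k _ => hint_lin k]
  congr 2
  · refine Finset.sum_congr rfl fun k _ => ?_
    rw [integral_finsetSum _ fun l _ => hint_quad k l]
    refine Finset.sum_congr rfl fun l _ => ?_
    rw [(hquad k l).integral_fun_mul_eq_mul_integral ((hX k).integrable_mul (hX l)).1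
      ((hV k).integrable_mul (hV l)).1, hΛ]
  · congr 1
    refine Finset.sum_congr rfl fun k _ => ?_
    rw [(hlin k).integral_fun_mul_eq_mul_integral ((hX k).integrable_mul hY).1 (hV k).1, hμ]

theorem integral_sq_dotProduct_sub_eq [IsProbabilityMeasure P] {X : Ω → ι → ℝ} {Y : Ω → ℝ}
    {Λ : Matrix ι ι ℝ} {μ : ι → ℝ}
    (hX : ∀ k, MemLp (fun ω => X ω k) 2 P) (hY : MemLp Y 2 P)
    (hΛ : ∀ k l, ∫ ω, X ω k * X ω l ∂P = Λ k l) (hμ : ∀ k, ∫ ω, X ω k * Y ω ∂P = μ k)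
    (w : ι → ℝ) :
    ∫ ω, (w ⬝ᵥ X ω - Y ω) ^ 2 ∂P = w ⬝ᵥ Λ *ᵥ w - 2 * (w ⬝ᵥ μ) + ∫ ω, Y ω ^ 2 ∂P := by
  have h := integral_sq_dotProduct_sub_of_indepFun (indepFun_const_right _ w) hX hY
    (fun _ => memLp_const _) hΛ hμ
  simp only [integral_const, probReal_univ, one_smul] at h
  rw [dotProduct_mulVec_eq_sum, dotProduct_comm w μ]
  simp_rw [dotProduct_comm w (X _)]
  exact h

theorem integral_sq_dotProduct_sub_eq_add [IsProbabilityMeasure P] {X : Ω → ι → ℝ}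
    {Y : Ω → ℝ} {Λ : Matrix ι ι ℝ} {μ a : ι → ℝ}
    (hX : ∀ k, MemLp (fun ω => X ω k) 2 P) (hY : MemLp Y 2 P)
    (hΛ : ∀ k l, ∫ ω, X ω k * X ω l ∂P = Λ k l) (hμ : ∀ k, ∫ ω, X ω k * Y ω ∂P = μ k)
    (hΛsymm : Λ.IsSymm) (ha : Λ *ᵥ a = μ) (w : ι → ℝ) :
    ∫ ω, (w ⬝ᵥ X ω - Y ω) ^ 2 ∂P
      = ∫ ω, (a ⬝ᵥ X ω - Y ω) ^ 2 ∂P + (w - a) ⬝ᵥ Λ *ᵥ (w - a) := by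
  rw [integral_sq_dotProduct_sub_eq hX hY hΛ hμ, integral_sq_dotProduct_sub_eq hX hY hΛ hμ]
  linarith [dotProduct_mulVec_sub_two_mul_eq hΛsymm ha w]

theorem integral_sq_dotProduct_sub_of_indepFun_eq_add [IsProbabilityMeasure P]
    {X V : Ω → ι → ℝ} {Y : Ω → ℝ} {Λ : Matrix ι ι ℝ} {μ : ι → ℝ}
    (hind : IndepFun (fun ω => (X ω, Y ω)) V P)
    (hX : ∀ k, MemLp (fun ω => X ω k) 2 P) (hY : MemLp Y 2 P)
    (hV : ∀ k, MemLp (fun ω => V ω k) 2 P)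
    (hΛ : ∀ k l, ∫ ω, X ω k * X ω l ∂P = Λ k l) (hμ : ∀ k, ∫ ω, X ω k * Y ω ∂P = μ k) :
    ∫ ω, (X ω ⬝ᵥ V ω - Y ω) ^ 2 ∂P
      = ∫ ω, ((fun k => ∫ ω, V ω k ∂P) ⬝ᵥ X ω - Y ω) ^ 2 ∂P
        + (Λ * covarianceMatrix V P).trace := by
  have hsecond k l : ∫ ω, V ω k * V ω l ∂P
      = (∫ ω, V ω k ∂P) * (∫ ω, V ω l ∂P) + covarianceMatrix V P k l := by
    rw [covarianceMatrix, of_apply, covariance_eq_sub (hV k) (hV l)]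
    simp only [Pi.mul_apply]
    ring
  have htrace : (Λ * covarianceMatrix V P).trace
      = ∑ k, ∑ l, Λ k l * covarianceMatrix V P k l := by
    simp only [trace, diag_apply, Matrix.mul_apply, covarianceMatrix, of_apply]
    exact Finset.sum_congr rfl fun k _ => Finset.sum_congr rfl fun l _ => by
      rw [covariance_comm]
  rw [integral_sq_dotProduct_sub_of_indepFun hind hX hY hV hΛ hμ,
    integral_sq_dotProduct_sub_eq hX hY hΛ hμ, htrace, dotProduct_mulVec_eq_sum,
    dotProduct_comm _ μ]
  simp only [hsecond, mul_add, Finset.sum_add_distrib, dotProduct]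
  ring

theorem covarianceMatrix_mulVec [IsFiniteMeasure P] {κ : Type*} [Fintype κ] {W : Ω → ι → ℝ}
    (hW : ∀ k, MemLp (fun ω => W ω k) 2 P) (A : Matrix κ ι ℝ) :
    covarianceMatrix (fun ω => A *ᵥ W ω) P = A * covarianceMatrix W P * Aᵀ := by
  ext k k'
  simp only [covarianceMatrix, of_apply, mulVec, dotProduct, Matrix.mul_apply, transpose_apply]
  rw [covariance_fun_sum_fun_sum (fun l => (hW l).const_mul _) (fun l => (hW l).const_mul _)]
  simp only [covariance_const_mul_left, covariance_const_mul_right, Finset.sum_mul]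
  rw [Finset.sum_comm]
  exact Finset.sum_congr rfl fun l _ => Finset.sum_congr rfl fun l' _ => by ring

theorem integral_mulVec_apply {κ : Type*} {W : Ω → ι → ℝ}
    (hW : ∀ k, Integrable (fun ω => W ω k) P) (A : Matrix κ ι ℝ) (k : κ) :
    ∫ ω, (A *ᵥ W ω) k ∂P = (A *ᵥ fun l => ∫ ω, W ω l ∂P) k := by
  simp only [mulVec, dotProduct]
  rw [integral_finsetSum _ fun l _ => (hW l).const_mul _]
  simp only [integral_const_mul]

theorem integral_sq_dotProduct_mulVec_sum_sub [IsProbabilityMeasure P] {κ : Type*} [Fintype κ]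
    {X : Ω → ι → ℝ} {Y : Ω → ℝ} {Z : κ → Ω → ι → ℝ} {Λ : Matrix ι ι ℝ} {μ : ι → ℝ}
    (hind : IndepFun (fun ω => (X ω, Y ω)) (fun ω p => Z p ω) P)
    (hZind : Pairwise fun p q => IndepFun (Z p) (Z q) P)
    (hX : ∀ k, MemLp (fun ω => X ω k) 2 P) (hY : MemLp Y 2 P)
    (hZ : ∀ p k, MemLp (fun ω => Z p ω k) 2 P)
    (hΛ : ∀ k l, ∫ ω, X ω k * X ω l ∂P = Λ k l) (hμ : ∀ k, ∫ ω, X ω k * Y ω ∂P = μ k)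
    (A : Matrix ι ι ℝ) :
    ∫ ω, (X ω ⬝ᵥ A *ᵥ ∑ p, Z p ω - Y ω) ^ 2 ∂P
      = ∫ ω, ((A *ᵥ ∑ p, fun k => ∫ ω, Z p ω k ∂P) ⬝ᵥ X ω - Y ω) ^ 2 ∂P
        + (Λ * (A * (∑ p, covarianceMatrix (Z p) P) * Aᵀ)).trace := by
  have hS k : MemLp (fun ω => (∑ p, Z p ω) k) 2 P := by
    simpa only [Finset.sum_apply] using memLp_finsetSum _ fun p _ => hZ p k
  have hV k : MemLp (fun ω => (A *ᵥ ∑ p, Z p ω) k) 2 P :=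
    memLp_finsetSum _ fun l _ => (hS l).const_mul (A k l)
  have hindV : IndepFun (fun ω => (X ω, Y ω)) (fun ω => A *ᵥ ∑ p, Z p ω) P :=
    hind.comp (φ := id) (ψ := fun g : κ → ι → ℝ => A *ᵥ ∑ p, g p) measurable_id
      (by fun_prop)
  have hmean : (fun k => ∫ ω, (A *ᵥ ∑ p, Z p ω) k ∂P) = A *ᵥ ∑ p, fun k => ∫ ω, Z p ω k ∂P := by
    ext k
    rw [integral_mulVec_apply (fun l => (hS l).integrable one_le_two)]
    congr 2
    ext l
    simp only [Finset.sum_apply]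
    exact integral_finsetSum _ fun p _ => (hZ p l).integrable one_le_two
  rw [integral_sq_dotProduct_sub_of_indepFun_eq_add hindV hX hY hV hΛ hμ, hmean,
    covarianceMatrix_mulVec hS, covarianceMatrix_sum_of_pairwise_indepFun hZind hZ]

theorem integral_sq_dotProduct_mulVec_sum_sum_smul_sub [IsProbabilityMeasure P]
    {τ κ : Type*} [Fintype τ] [Fintype κ] {x : τ → κ → Ω → ι → ℝ} {y : τ → κ → Ω → ℝ}
    {xq : Ω → ι → ℝ} {yq : Ω → ℝ}
    (hxmeas : ∀ s i, Measurable (x s i)) (hymeas : ∀ s i, Measurable (y s i))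
    (hxqmeas : Measurable xq) (hyqmeas : Measurable yq)
    (hindep : iIndepFun (Sum.elim (fun (p : τ × κ) ω => (x p.1 p.2 ω, y p.1 p.2 ω))
      (fun _ : Unit => fun ω => (xq ω, yq ω))) P)
    (h2 : ∀ s i k, MemLp (fun ω => x s i ω k * y s i ω) 2 P)
    (hyq2 : MemLp yq 2 P) (hxq2 : ∀ k, MemLp (fun ω => xq ω k) 2 P)
    {Λ : Matrix ι ι ℝ} (hΛq : ∀ k l, ∫ ω, xq ω k * xq ω l ∂P = Λ k l)
    {μq : ι → ℝ} (hμq : ∀ k, ∫ ω, xq ω k * yq ω ∂P = μq k)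
    {μ : τ → ι → ℝ} (hμ : ∀ s i, μ s = fun k => ∫ ω, x s i ω k * y s i ω ∂P)
    {Sig : τ → Matrix ι ι ℝ}
    (hSig : ∀ s i, Sig s = Matrix.of fun k l =>
        (∫ ω, (x s i ω k * y s i ω) * (x s i ω l * y s i ω) ∂P) - μ s k * μ s l)
    (A : Matrix ι ι ℝ) :
    ∫ ω, (xq ω ⬝ᵥ A *ᵥ ∑ s, ∑ i, y s i ω • x s i ω - yq ω) ^ 2 ∂P
      = ∫ ω, ((A *ᵥ ((Fintype.card κ : ℝ) • ∑ s, μ s)) ⬝ᵥ xq ω - yq ω) ^ 2 ∂P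
        + (Λ * (A * ((Fintype.card κ : ℝ) • ∑ s, Sig s) * Aᵀ)).trace := by
  set Z : τ × κ → Ω → ι → ℝ := fun p ω k => x p.1 p.2 ω k * y p.1 p.2 ω
  have hsum ω : ∑ s, ∑ i, y s i ω • x s i ω = ∑ p, Z p ω := by
    rw [Fintype.sum_prod_type]
    ext k
    simp only [Z, Finset.sum_apply, Pi.smul_apply, smul_eq_mul, mul_comm]
  have hind : IndepFun (fun ω => (xq ω, yq ω)) (fun ω p => Z p ω) P :=
    (hindep.indepFun_sum_elim_unit (fun p => (hxmeas p.1 p.2).prodMk (hymeas p.1 p.2))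
      (hxqmeas.prodMk hyqmeas)).comp (φ := id)
      (ψ := fun (g : τ × κ → (ι → ℝ) × ℝ) p k => (g p).1 k * (g p).2) measurable_id
      (by fun_prop)
  have hZind : Pairwise fun p q => IndepFun (Z p) (Z q) P := fun p q hpq =>
    (hindep.indepFun (Sum.inl_injective.ne hpq)).comp
      (φ := fun q : (ι → ℝ) × ℝ => fun k => q.1 k * q.2)
      (ψ := fun q : (ι → ℝ) × ℝ => fun k => q.1 k * q.2) (by fun_prop) (by fun_prop)
  have hmean : ∑ p, (fun k => ∫ ω, Z p ω k ∂P) = (Fintype.card κ : ℝ) • ∑ s, μ s := by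
    simp only [Z, ← hμ, sum_prod_fst, Nat.cast_smul_eq_nsmul]
  have hcov : ∑ p, covarianceMatrix (Z p) P = (Fintype.card κ : ℝ) • ∑ s, Sig s := by
    have hcov_pair p : covarianceMatrix (Z p) P = Sig p.1 := by
      ext k l
      rw [hSig p.1 p.2, covarianceMatrix, of_apply, of_apply,
        covariance_eq_sub (h2 p.1 p.2 k) (h2 p.1 p.2 l), hμ p.1 p.2]
      rfl
    simp only [hcov_pair, sum_prod_fst, Nat.cast_smul_eq_nsmul]
  simp only [hsum]
  rw [integral_sq_dotProduct_mulVec_sum_sub hind hZind hxq2 hyq2 (fun p k => h2 p.1 p.2 k)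
    hΛq hμq, hmean, hcov]

end Moments

section Gamma

variable {n : Type*} [Fintype n] [DecidableEq n]

noncomputable def gammaMatrix (Λ : Matrix n n ℝ) (N : ℝ) : Matrix n n ℝ :=
  (1 + 1 / N) • Λ + (Λ.trace / N) • (1 : Matrix n n ℝ)

variable {Λ U : Matrix n n ℝ} {lam : n → ℝ} {N : ℝ}

lemma lam_add_lam_add_trace_div_pos (hU : U * Uᵀ = 1) (hΛ : Λ = Uᵀ * diagonal lam * U)
    (hlam : ∀ i, 0 < lam i) (hN : 0 < N) (i : n) : 0 < lam i + (lam i + Λ.trace) / N := by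
  have htr : 0 ≤ Λ.trace := by
    rw [hΛ, trace_conj_diagonal hU]
    exact Finset.sum_nonneg fun i _ => (hlam i).le
  have := hlam i
  positivity

lemma inv_gammaMatrix_eq (hU : U * Uᵀ = 1) (hΛ : Λ = Uᵀ * diagonal lam * U)
    (hlam : ∀ i, 0 < lam i) (hN : 0 < N) :
    (gammaMatrix Λ N)⁻¹ = Uᵀ * diagonal (fun i => (lam i + (lam i + Λ.trace) / N)⁻¹) * U := by
  have hdiag : (fun i => (1 + 1 / N) * lam i + Λ.trace / N)
      = fun i => lam i + (lam i + Λ.trace) / N := by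
    funext i
    field_simp
    ring
  rw [gammaMatrix]
  nth_rewrite 1 [hΛ]
  rw [smul_conj_diagonal_add_smul_one hU, hdiag,
    inv_conj_diagonal hU fun i => (lam_add_lam_add_trace_div_pos hU hΛ hlam hN i).ne']

lemma transpose_inv_gammaMatrix (hU : U * Uᵀ = 1) (hΛ : Λ = Uᵀ * diagonal lam * U)
    (hlam : ∀ i, 0 < lam i) (hN : 0 < N) : (gammaMatrix Λ N)⁻¹ᵀ = (gammaMatrix Λ N)⁻¹ := by
  rw [inv_gammaMatrix_eq hU hΛ hlam hN, transpose_conj_diagonal]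

lemma commute_inv_gammaMatrix (hU : U * Uᵀ = 1) (hΛ : Λ = Uᵀ * diagonal lam * U)
    (hlam : ∀ i, 0 < lam i) (hN : 0 < N) : Commute Λ (gammaMatrix Λ N)⁻¹ := by
  rw [inv_gammaMatrix_eq hU hΛ hlam hN]
  nth_rewrite 1 [hΛ]
  exact commute_conj_diagonal hU _ _

theorem dotProduct_mulVec_inv_gammaMatrix_sub_eq_sum (hU : U * Uᵀ = 1)
    (hΛ : Λ = Uᵀ * diagonal lam * U) (hlam : ∀ i, 0 < lam i) (hN : 0 < N)
    (β : ℝ) (S m : n → ℝ) :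
    ((gammaMatrix Λ N)⁻¹ *ᵥ (β • S) - Λ⁻¹ *ᵥ m) ⬝ᵥ Λ *ᵥ ((gammaMatrix Λ N)⁻¹ *ᵥ (β • S) - Λ⁻¹ *ᵥ m)
      = ∑ i, (1 / lam i) *
          ((lam i * (β * (U *ᵥ S) i - (U *ᵥ m) i) - (U *ᵥ m) i * (lam i + Λ.trace) / N)
            / (lam i + (lam i + Λ.trace) / N)) ^ 2 := by
  have hγ := lam_add_lam_add_trace_div_pos hU hΛ hlam hN
  rw [inv_gammaMatrix_eq hU hΛ hlam hN]
  generalize Λ.trace = t at hγ ⊢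
  rw [hΛ, inv_conj_diagonal hU fun i => (hlam i).ne', dotProduct_conj_diagonal_mulVec_sub hU]
  refine Finset.sum_congr rfl fun i _ => ?_
  have hnum : lam i * (β * (U *ᵥ S) i - (U *ᵥ m) i) - (U *ᵥ m) i * (lam i + t) / N
      = lam i * (β * (U *ᵥ S) i) - (U *ᵥ m) i * (lam i + (lam i + t) / N) := by ring
  have hi := (hlam i).ne'
  have hγi := (hγ i).ne'
  rw [hnum, mulVec_smul]
  generalize lam i + (lam i + t) / N = g at hγi ⊢
  simp only [Pi.smul_apply, smul_eq_mul]
  field_simp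

end Gamma

theorem stmt_16_general (d M T : ℕ) (hM : 1 ≤ M)
    (Ω : Type*) [MeasurableSpace Ω] (P : Measure Ω) [IsProbabilityMeasure P]
    (x : Fin T → Fin M → Ω → Fin d → ℝ) (y : Fin T → Fin M → Ω → ℝ)
    (xq : Ω → Fin d → ℝ) (yq : Ω → ℝ)
    (hxmeas : ∀ s i, Measurable (x s i)) (hymeas : ∀ s i, Measurable (y s i))
    (hxqmeas : Measurable xq) (hyqmeas : Measurable yq)
    (hindep : iIndepFun (m :=
        (fun _ : (Fin T × Fin M) ⊕ Unit =>
          (inferInstance : MeasurableSpace ((Fin d → ℝ) × ℝ))))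
        (Sum.elim (fun p ω => (x p.1 p.2 ω, y p.1 p.2 ω)) (fun _ ω => (xq ω, yq ω))) P)
    (tl : Fin T)
    (hqdist : ∀ i, IdentDistrib (fun ω => (xq ω, yq ω))
        (fun ω => (x tl i ω, y tl i ω)) P P)
    (h2 : ∀ s i k, MemLp (fun ω => x s i ω k * y s i ω) 2 P)
    (hyq2 : MemLp yq 2 P) (hxq2 : ∀ k, MemLp (fun ω => xq ω k) 2 P)
    (Λ : Matrix (Fin d) (Fin d) ℝ) (hΛpd : Λ.PosDef) (hΛsym : Λ.IsSymm)
    (hΛq : ∀ k l, ∫ ω, xq ω k * xq ω l ∂P = Λ k l)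
    (lam : Fin d → ℝ) (u : Fin d → Fin d → ℝ)
    (hlam : ∀ i, 0 < lam i)
    (hortho : ∀ i j, u i ⬝ᵥ u j = if i = j then (1 : ℝ) else 0)
    (hΛeig : Λ = ∑ i, lam i • vecMulVec (u i) (u i))
    (N : ℝ) (hN : 0 < N)
    (Γ : Matrix (Fin d) (Fin d) ℝ)
    (hΓ : Γ = (1 + 1 / N) • Λ + (Λ.trace / N) • (1 : Matrix (Fin d) (Fin d) ℝ))
    (μ : Fin T → Fin d → ℝ)
    (hμ : ∀ s i, μ s = fun k => ∫ ω, x s i ω k * y s i ω ∂P)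
    (Sig : Fin T → Matrix (Fin d) (Fin d) ℝ)
    (hSig : ∀ s i, Sig s = Matrix.of fun k l =>
        (∫ ω, (x s i ω k * y s i ω) * (x s i ω l * y s i ω) ∂P) - μ s k * μ s l)
    (β : ℝ) (hβ : β = (M : ℝ) / ((T : ℝ) * ((M : ℝ) + 1) + 1))
    (a b : Fin d → ℝ) (ha : a = Λ⁻¹ *ᵥ μ tl) (hb : b = Γ⁻¹ *ᵥ (β • ∑ s, μ s))
    (s : Fin d → ℝ) (hs : ∀ i, s i = u i ⬝ᵥ ∑ s', μ s')
    (m : Fin d → ℝ) (hm : ∀ i, m i = u i ⬝ᵥ μ tl)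
    (Yhat : Ω → ℝ)
    (hYhat : ∀ ω, Yhat ω = xq ω ⬝ᵥ (Γ⁻¹ *ᵥ
        ((1 / ((T : ℝ) * ((M : ℝ) + 1) + 1)) • ∑ s', ∑ i, y s' i ω • x s' i ω))) :
    (∀ w : Fin d → ℝ,
        ∫ ω, (a ⬝ᵥ xq ω - yq ω) ^ 2 ∂P ≤ ∫ ω, (w ⬝ᵥ xq ω - yq ω) ^ 2 ∂P) ∧
    (∫ ω, (Yhat ω - yq ω) ^ 2 ∂P
      = (∫ ω, (a ⬝ᵥ xq ω - yq ω) ^ 2 ∂P)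
        + ((M : ℝ) / ((T : ℝ) * ((M : ℝ) + 1) + 1) ^ 2)
            * ∑ s', (Sig s' * (Γ⁻¹ * Γ⁻¹) * Λ).trace
        + (b - a) ⬝ᵥ (Λ *ᵥ (b - a))) ∧
    (b - a) ⬝ᵥ (Λ *ᵥ (b - a))
      = ∑ i, (1 / lam i) *
          ((lam i * (β * s i - m i) - m i * (lam i + Λ.trace) / N)
            / (lam i + (lam i + Λ.trace) / N)) ^ 2 := by
  set c : ℝ := 1 / ((T : ℝ) * ((M : ℝ) + 1) + 1) with hc
  have hU := of_mul_transpose_eq_one hortho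
  have hΛU : Λ = (of u)ᵀ * diagonal lam * of u := hΛeig.trans (sum_smul_vecMulVec_eq u lam)
  have hΓ' : Γ = gammaMatrix Λ N := hΓ
  have hμq k : ∫ ω, xq ω k * yq ω ∂P = μ tl k := by
    rw [hμ tl ⟨0, hM⟩]
    exact ((hqdist ⟨0, hM⟩).comp
      (by fun_prop : Measurable fun q : (Fin d → ℝ) × ℝ => q.1 k * q.2)).integral_eq
  have hΛa : Λ *ᵥ a = μ tl := by
    rw [ha, mulVec_mulVec, mul_nonsing_inv _ ((isUnit_iff_isUnit_det _).mp hΛpd.isUnit),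
      one_mulVec]
  have hrisk := integral_sq_dotProduct_sub_eq_add hxq2 hyq2 hΛq hμq hΛsym hΛa
  refine ⟨fun w => ?_, ?_, ?_⟩
  · have hpos := hΛpd.posSemidef.dotProduct_mulVec_nonneg (w - a)
    rw [star_trivial] at hpos
    exact (hrisk w).symm ▸ le_add_of_nonneg_right hpos
  · have hmean : (c • Γ⁻¹) *ᵥ ((M : ℝ) • ∑ s, μ s) = b := by
      rw [hb, hβ, smul_mulVec, mulVec_smul, mulVec_smul, smul_smul, hc, one_div_mul_eq_div]
    simp only [hYhat, mulVec_smul, ← smul_mulVec]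
    rw [integral_sq_dotProduct_mulVec_sum_sum_smul_sub hxmeas hymeas hxqmeas hyqmeas hindep h2
      hyq2 hxq2 hΛq hμq hμ hSig, Fintype.card_fin, hmean, hrisk b,
      trace_mul_smul_mul_mul_smul_transpose (hΓ' ▸ transpose_inv_gammaMatrix hU hΛU hlam hN)
        (hΓ' ▸ commute_inv_gammaMatrix hU hΛU hlam hN),
      Matrix.smul_mul, Matrix.smul_mul, trace_smul, Matrix.sum_mul, Matrix.sum_mul, trace_sum,
      smul_eq_mul, hc]
    field_simp
    ring
  · rw [hb, ha, hΓ']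
    simp only [hs, hm]
    exact dotProduct_mulVec_inv_gammaMatrix_sub_eq_sum hU hΛU hlam hN β _ _

/-- Prediction error for task `t` after `T` tasks: with mutually
independent in-context pairs (i.i.d. within each task), query pair distributed as the
task-`t` pairs, `E[x_{t,q}] = 0`, `E[x_{t,q}x_{t,q}ᵀ] = Λ`, and
`Ŷ_{t,q} = x_{t,q}ᵀΓ⁻¹((1/(T(M+1)+1)) Σ_{s=1}^T Σ_i x_{s,i}y_{s,i})`, one has
`E[(Ŷ−y)²] = min_w E[(wᵀx−y)²] + (M/(T(M+1)+1)²) Σ_s tr(Σ_sΓ⁻²Λ) + (b−a)ᵀΛ(b−a)`,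
the minimum being attained at `a = Λ⁻¹μ_t`, with `b = Γ⁻¹βΣ_sμ_s`; moreover the bias
term has the explicit eigen-coordinate form
`Σ_i (1/λ_i)((λ_i(βs_i − m_i) − m_i(λ_i+trΛ)/N)/(λ_i + (λ_i+trΛ)/N))²`. -/
theorem stmt_16 (d M T t : ℕ) (hd : 1 ≤ d) (hM : 1 ≤ M) (hT : 1 ≤ T)
    (ht1 : 1 ≤ t) (htT : t ≤ T)
    (Ω : Type*) [MeasurableSpace Ω] (P : Measure Ω) [IsProbabilityMeasure P]
    (x : Fin T → Fin M → Ω → Fin d → ℝ) (y : Fin T → Fin M → Ω → ℝ)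
    (xq : Ω → Fin d → ℝ) (yq : Ω → ℝ)
    (hxmeas : ∀ s i, Measurable (x s i)) (hymeas : ∀ s i, Measurable (y s i))
    (hxqmeas : Measurable xq) (hyqmeas : Measurable yq)
    (hindep : iIndepFun (m :=
        (fun _ : (Fin T × Fin M) ⊕ Unit =>
          (inferInstance : MeasurableSpace ((Fin d → ℝ) × ℝ))))
        (Sum.elim (fun p ω => (x p.1 p.2 ω, y p.1 p.2 ω)) (fun _ ω => (xq ω, yq ω))) P)
    (hiid : ∀ s i j, IdentDistrib (fun ω => (x s i ω, y s i ω))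
        (fun ω => (x s j ω, y s j ω)) P P)
    (tl : Fin T) (htl : (tl : ℕ) = t - 1)
    (hqdist : ∀ i, IdentDistrib (fun ω => (xq ω, yq ω))
        (fun ω => (x tl i ω, y tl i ω)) P P)
    (h2 : ∀ s i k, MemLp (fun ω => x s i ω k * y s i ω) 2 P)
    (hyq2 : MemLp yq 2 P) (hxq2 : ∀ k, MemLp (fun ω => xq ω k) 2 P)
    (hqmean : ∀ k, ∫ ω, xq ω k ∂P = 0)
    (Λ : Matrix (Fin d) (Fin d) ℝ) (hΛpd : Λ.PosDef) (hΛsym : Λ.IsSymm)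
    (hΛq : ∀ k l, ∫ ω, xq ω k * xq ω l ∂P = Λ k l)
    (lam : Fin d → ℝ) (u : Fin d → Fin d → ℝ)
    (hlam : ∀ i, 0 < lam i)
    (hortho : ∀ i j, u i ⬝ᵥ u j = if i = j then (1 : ℝ) else 0)
    (hΛeig : Λ = ∑ i, lam i • vecMulVec (u i) (u i))
    (N : ℝ) (hN : 0 < N)
    (Γ : Matrix (Fin d) (Fin d) ℝ)
    (hΓ : Γ = (1 + 1 / N) • Λ + (Λ.trace / N) • (1 : Matrix (Fin d) (Fin d) ℝ))
    (μ : Fin T → Fin d → ℝ)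
    (hμ : ∀ s i, μ s = fun k => ∫ ω, x s i ω k * y s i ω ∂P)
    (Sig : Fin T → Matrix (Fin d) (Fin d) ℝ)
    (hSig : ∀ s i, Sig s = Matrix.of fun k l =>
        (∫ ω, (x s i ω k * y s i ω) * (x s i ω l * y s i ω) ∂P) - μ s k * μ s l)
    (β : ℝ) (hβ : β = (M : ℝ) / ((T : ℝ) * ((M : ℝ) + 1) + 1))
    (a b : Fin d → ℝ) (ha : a = Λ⁻¹ *ᵥ μ tl) (hb : b = Γ⁻¹ *ᵥ (β • ∑ s, μ s))
    (s : Fin d → ℝ) (hs : ∀ i, s i = u i ⬝ᵥ ∑ s', μ s')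
    (m : Fin d → ℝ) (hm : ∀ i, m i = u i ⬝ᵥ μ tl)
    (Yhat : Ω → ℝ)
    (hYhat : ∀ ω, Yhat ω = xq ω ⬝ᵥ (Γ⁻¹ *ᵥ
        ((1 / ((T : ℝ) * ((M : ℝ) + 1) + 1)) • ∑ s', ∑ i, y s' i ω • x s' i ω))) :
    (∀ w : Fin d → ℝ,
        ∫ ω, (a ⬝ᵥ xq ω - yq ω) ^ 2 ∂P ≤ ∫ ω, (w ⬝ᵥ xq ω - yq ω) ^ 2 ∂P) ∧
    (∫ ω, (Yhat ω - yq ω) ^ 2 ∂P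
      = (∫ ω, (a ⬝ᵥ xq ω - yq ω) ^ 2 ∂P)
        + ((M : ℝ) / ((T : ℝ) * ((M : ℝ) + 1) + 1) ^ 2)
            * ∑ s', (Sig s' * (Γ⁻¹ * Γ⁻¹) * Λ).trace
        + (b - a) ⬝ᵥ (Λ *ᵥ (b - a))) ∧
    (b - a) ⬝ᵥ (Λ *ᵥ (b - a))
      = ∑ i, (1 / lam i) *
          ((lam i * (β * s i - m i) - m i * (lam i + Λ.trace) / N)
            / (lam i + (lam i + Λ.trace) / N)) ^ 2 :=
  stmt_16_general d M T hM Ω P x y xq yq hxmeas hymeas hxqmeas hyqmeas hindep tl hqdist h2 hyq2 hxq2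
    Λ hΛpd hΛsym hΛq lam u hlam hortho hΛeig N hN Γ hΓ μ hμ Sig hSig β hβ a b ha hb s hs m hm Yhat
    hYhat
end

section
/- Fix T ≥ 1 and 1 ≤ t ≤ T, and for M ≥ 1 define c_t(M) = −((T−t)M + (T+1−t))/(t(M+1)(T(M+1)+1)) and d(M) = 1/(T(M+1)+1). Then as M → ∞: M^2 · c_t(M)^2 → (T−t)^2/(t^2 T^2), M^2 · c_t(M) · d(M) → −(T−t)/(t T^2), and M^2 · d(M)^2 → 1/T^2. Consequently, in the interference error the mean-interaction terms M^2 α_i(t) α_j(t) tr(μ_i μ_j^T Γ^{−2} Λ) converge to nonzero constants as the context length M grows (whenever the corresponding traces are nonzero), while the variance terms α_i(t)^2 · M · tr(Σ_i Γ^{−2} Λ) converge to 0; hence forgetting induced by mean misalignment persists asymptotically in the long-context regime. -/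
open Filter

lemma aux_lim (T t : ℕ) (hT : 1 ≤ T) (ht1 : 1 ≤ t)
    (c : ℕ → ℕ → ℝ)
    (hc : ∀ t' M : ℕ, c t' M = -((((T : ℝ) - t') * M + ((T : ℝ) + 1 - t'))
        / ((t' : ℝ) * ((M : ℝ) + 1) * ((T : ℝ) * ((M : ℝ) + 1) + 1))))
    (dd : ℕ → ℝ) (hdd : ∀ M : ℕ, dd M = 1 / ((T : ℝ) * ((M : ℝ) + 1) + 1)) :
    Tendsto (fun M : ℕ => (M : ℝ) * c t M) atTop
      (nhds (-(((T : ℝ) - t) / ((t : ℝ) * T)))) ∧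
    Tendsto (fun M : ℕ => (M : ℝ) * dd M) atTop (nhds (1 / (T : ℝ))) := by
  have hT0 : (T : ℝ) > 0 := by exact_mod_cast hT
  have ht0 : (t : ℝ) > 0 := by exact_mod_cast ht1
  have hu : Tendsto (fun M : ℕ => 1 / (M : ℝ)) atTop (nhds 0) :=
    tendsto_one_div_atTop_nhds_zero_nat
  set Fc : ℝ → ℝ := fun u =>
    -((((T : ℝ) - t) + ((T : ℝ) + 1 - t) * u)
      / ((t : ℝ) * (1 + u) * ((T : ℝ) * (1 + u) + u))) with hFc
  set Fd : ℝ → ℝ := fun u => 1 / ((T : ℝ) * (1 + u) + u) with hFd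
  have hden : (t : ℝ) * (1 + 0) * ((T : ℝ) * (1 + 0) + 0) ≠ 0 := by
    positivity
  have hcontc : ContinuousAt Fc 0 := by
    apply ContinuousAt.neg
    apply ContinuousAt.div
    · fun_prop
    · fun_prop
    · exact hden
  have hcontd : ContinuousAt Fd 0 := by
    apply ContinuousAt.div
    · fun_prop
    · fun_prop
    · simpa using (by positivity : (T : ℝ) * (1 + 0) + 0 > 0).ne'
  have hFc0 : Fc 0 = -(((T : ℝ) - t) / ((t : ℝ) * T)) := by
    simp [hFc]
  have hFd0 : Fd 0 = 1 / (T : ℝ) := by simp [hFd]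
  have hcc : Tendsto (fun M : ℕ => Fc (1 / (M : ℝ))) atTop
      (nhds (-(((T : ℝ) - t) / ((t : ℝ) * T)))) := by
    rw [← hFc0]; exact (hcontc.tendsto).comp hu
  have hddlim : Tendsto (fun M : ℕ => Fd (1 / (M : ℝ))) atTop
      (nhds (1 / (T : ℝ))) := by
    rw [← hFd0]; exact (hcontd.tendsto).comp hu
  have heqc : ∀ᶠ M : ℕ in atTop, Fc (1 / (M : ℝ)) = (M : ℝ) * c t M := by
    filter_upwards [eventually_ge_atTop 1] with M hM
    have hM0 : (M : ℝ) > 0 := by exact_mod_cast hM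
    rw [hc t M, hFc]
    have h1 : (M : ℝ) + 1 ≠ 0 := by positivity
    have h2 : (T : ℝ) * ((M : ℝ) + 1) + 1 ≠ 0 := by positivity
    field_simp
  have heqd : ∀ᶠ M : ℕ in atTop, Fd (1 / (M : ℝ)) = (M : ℝ) * dd M := by
    filter_upwards [eventually_ge_atTop 1] with M hM
    have hM0 : (M : ℝ) > 0 := by exact_mod_cast hM
    rw [hdd M, hFd]
    have h2 : (T : ℝ) * ((M : ℝ) + 1) + 1 ≠ 0 := by positivity
    field_simp
  exact ⟨hcc.congr' heqc, hddlim.congr' heqd⟩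

/-- long-context asymptotics of the reweighting coefficients:
`M²c_t(M)² → (T−t)²/(t²T²)`, `M²c_t(M)d(M) → −(T−t)/(tT²)`, `M²d(M)² → 1/T²`;
consequently the variance terms `α_i(t)²·M·tr(Σ_i Γ⁻²Λ)` converge to 0 while the
mean-interaction terms `M²α_i(t)α_j(t)·tr(μ_iμ_jᵀΓ⁻²Λ)` converge to (nonzero, when
the trace is nonzero) constants, so forgetting induced by mean misalignment persists. -/
theorem stmt_18 (T t : ℕ) (hT : 1 ≤ T) (ht1 : 1 ≤ t) (htT : t ≤ T)
    (c : ℕ → ℕ → ℝ)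
    (hc : ∀ t' M : ℕ, c t' M = -((((T : ℝ) - t') * M + ((T : ℝ) + 1 - t'))
        / ((t' : ℝ) * ((M : ℝ) + 1) * ((T : ℝ) * ((M : ℝ) + 1) + 1))))
    (dd : ℕ → ℝ) (hdd : ∀ M : ℕ, dd M = 1 / ((T : ℝ) * ((M : ℝ) + 1) + 1)) :
    Tendsto (fun M : ℕ => (M : ℝ) ^ 2 * (c t M) ^ 2) atTop
      (nhds (((T : ℝ) - t) ^ 2 / ((t : ℝ) ^ 2 * (T : ℝ) ^ 2))) ∧
    Tendsto (fun M : ℕ => (M : ℝ) ^ 2 * (c t M * dd M)) atTop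
      (nhds (-(((T : ℝ) - t) / ((t : ℝ) * (T : ℝ) ^ 2)))) ∧
    Tendsto (fun M : ℕ => (M : ℝ) ^ 2 * (dd M) ^ 2) atTop
      (nhds (1 / (T : ℝ) ^ 2)) ∧
    (∀ v : ℝ, Tendsto (fun M : ℕ => (c t M) ^ 2 * (M : ℝ) * v) atTop (nhds 0)) ∧
    (∀ v : ℝ, Tendsto (fun M : ℕ => (dd M) ^ 2 * (M : ℝ) * v) atTop (nhds 0)) ∧
    (∀ h : ℝ, h ≠ 0 →
      Tendsto (fun M : ℕ => (M : ℝ) ^ 2 * (dd M) ^ 2 * h) atTop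
          (nhds (h / (T : ℝ) ^ 2))
        ∧ h / (T : ℝ) ^ 2 ≠ 0) := by
  obtain ⟨hmc, hmd⟩ := aux_lim T t hT ht1 c hc dd hdd
  have hT0 : (T : ℝ) > 0 := by exact_mod_cast hT
  have ht0 : (t : ℝ) > 0 := by exact_mod_cast ht1
  have hu : Tendsto (fun M : ℕ => 1 / (M : ℝ)) atTop (nhds 0) :=
    tendsto_one_div_atTop_nhds_zero_nat
  -- c t M → 0 and dd M → 0
  have hc0 : Tendsto (fun M : ℕ => c t M) atTop (nhds 0) := by
    have := hmc.mul hu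
    rw [mul_zero] at this
    refine this.congr' ?_
    filter_upwards [eventually_ge_atTop 1] with M hM
    have hM0 : (M : ℝ) ≠ 0 := by positivity
    field_simp
  have hd0 : Tendsto (fun M : ℕ => dd M) atTop (nhds 0) := by
    have := hmd.mul hu
    rw [mul_zero] at this
    refine this.congr' ?_
    filter_upwards [eventually_ge_atTop 1] with M hM
    have hM0 : (M : ℝ) ≠ 0 := by positivity
    field_simp
  refine ⟨?_, ?_, ?_, ?_, ?_, ?_⟩
  · have e : -(((T:ℝ) - t) / ((t:ℝ) * T)) * -(((T:ℝ) - t) / ((t:ℝ) * T))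
        = ((T:ℝ) - t) ^ 2 / ((t:ℝ) ^ 2 * (T:ℝ) ^ 2) := by ring
    have := hmc.mul hmc
    rw [e] at this
    refine this.congr' ?_
    filter_upwards with M; ring
  · have e : -(((T:ℝ) - t) / ((t:ℝ) * T)) * (1 / (T:ℝ))
        = -(((T:ℝ) - t) / ((t:ℝ) * (T:ℝ) ^ 2)) := by ring
    have := hmc.mul hmd
    rw [e] at this
    refine this.congr' ?_
    filter_upwards with M; ring
  · have e : 1 / (T:ℝ) * (1 / (T:ℝ)) = 1 / (T:ℝ) ^ 2 := by ring
    have := hmd.mul hmd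
    rw [e] at this
    refine this.congr' ?_
    filter_upwards with M; ring
  · intro v
    have := (hmc.mul hc0).mul (tendsto_const_nhds (x := v))
    rw [mul_zero, zero_mul] at this
    refine this.congr' ?_
    filter_upwards with M; ring
  · intro v
    have := (hmd.mul hd0).mul (tendsto_const_nhds (x := v))
    rw [mul_zero, zero_mul] at this
    refine this.congr' ?_
    filter_upwards with M; ring
  · intro h hh
    constructor
    · have h2 : Tendsto (fun M : ℕ => (M : ℝ) ^ 2 * (dd M) ^ 2) atTop
          (nhds (1 / (T : ℝ) ^ 2)) := by
        have e : 1 / (T:ℝ) * (1 / (T:ℝ)) = 1 / (T:ℝ) ^ 2 := by ring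
        have := hmd.mul hmd
        rw [e] at this
        refine this.congr' ?_
        filter_upwards with M; ring
      have := h2.mul (tendsto_const_nhds (x := h))
      rw [show 1 / (T : ℝ) ^ 2 * h = h / (T : ℝ) ^ 2 by ring] at this
      exact this
    · positivity
end
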